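/- arXiv:2108.13076 — 4 statements merged into one kernel-verified Lean document; each statement's English description precedes it below -/
import Mathlib

section
/- Let R be a normal Helly circular-arc representation of a graph G extending a partial representation R', let D be a maximal clique of G and let J be a gap of D. Let ⊴ be the cyclic ordering of the maximal cliques of G given by the order of their clique points in R along the circle. Then the set S_J = {C a maximal clique of G : Reg(C) ⊆ J} is consecutive in ⊴. -/
open Set

noncomputable section

/-- The closed arc on the circle `AddCircle L` (circle of circumference `L`) whose
tail is `t` and which proceeds clockwise for length `len` (ending at its head
`t + len`). -/
def Arc (L : ℝ) (t : AddCircle L) (len : ℝ) : Set (AddCircle L) :=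
  {x : AddCircle L | ∃ s : ℝ, 0 ≤ s ∧ s ≤ len ∧ x = t + (s : AddCircle L)}

/-- A circular-arc representation of the (finite simple) graph `G` on a circle of
circumference `L`: every vertex `v` gets a closed arc (recorded by its tail and its
length, with `0 ≤ len v < L`), and two arcs of distinct vertices intersect iff the
vertices are adjacent. -/
structure CARep {V : Type*} (G : SimpleGraph V) (L : ℝ) where
  hL : 0 < L
  tail : V → AddCircle L
  len : V → ℝ
  len_nonneg : ∀ v, 0 ≤ len v
  len_lt : ∀ v, len v < L
  inter_iff : ∀ u v : V, u ≠ v →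
    ((Arc L (tail u) (len u) ∩ Arc L (tail v) (len v)).Nonempty ↔ G.Adj u v)

namespace CARep

variable {V : Type*} {G : SimpleGraph V} {L : ℝ}

/-- The arc of vertex `v`. -/
def arc (R : CARep G L) (v : V) : Set (AddCircle L) := Arc L (R.tail v) (R.len v)

/-- The head (clockwise endpoint) of the arc of `v`. -/
def head (R : CARep G L) (v : V) : AddCircle L := R.tail v + ((R.len v : ℝ) : AddCircle L)

/-- A representation is Helly if every nonempty family of pairwise intersecting arcs
has a common point. -/
def Helly (R : CARep G L) : Prop :=
  ∀ S : Set V, S.Nonempty → (∀ u ∈ S, ∀ v ∈ S, (R.arc u ∩ R.arc v).Nonempty) →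
    (⋂ v ∈ S, R.arc v).Nonempty

/-- A representation is normal if the intersection of any two arcs is empty or
connected. -/
def Normal (R : CARep G L) : Prop :=
  ∀ u v : V, u ≠ v → IsPreconnected (R.arc u ∩ R.arc v)

/-- A representation is proper if no arc is properly contained in another. -/
def Proper (R : CARep G L) : Prop := ∀ u v : V, ¬ R.arc u ⊂ R.arc v

/-- A representation is unit if every arc has length exactly one. -/
def IsUnit (R : CARep G L) : Prop := ∀ v, R.len v = 1

end CARep

/-- A partial circular-arc representation of `G`: a circular-arc representation of the
subgraph of `G` induced by the set `pre` of predrawn vertices.  (The fields `tail`/`len`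
are total functions; only their values on `pre` are meaningful.) -/
structure PartialCARep {V : Type*} (G : SimpleGraph V) (L : ℝ) where
  hL : 0 < L
  pre : Set V
  tail : V → AddCircle L
  len : V → ℝ
  len_nonneg : ∀ v ∈ pre, 0 ≤ len v
  len_lt : ∀ v ∈ pre, len v < L
  inter_iff : ∀ u ∈ pre, ∀ v ∈ pre, u ≠ v →
    ((Arc L (tail u) (len u) ∩ Arc L (tail v) (len v)).Nonempty ↔ G.Adj u v)

namespace PartialCARep

variable {V : Type*} {G : SimpleGraph V} {L : ℝ}

/-- The (predrawn) arc of vertex `v`. -/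
def arc (R' : PartialCARep G L) (v : V) : Set (AddCircle L) := Arc L (R'.tail v) (R'.len v)

/-- The head (clockwise endpoint) of the predrawn arc of `v`. -/
def head (R' : PartialCARep G L) (v : V) : AddCircle L :=
  R'.tail v + ((R'.len v : ℝ) : AddCircle L)

/-- The partial representation is Helly. -/
def Helly (R' : PartialCARep G L) : Prop :=
  ∀ S : Set V, S ⊆ R'.pre → S.Nonempty →
    (∀ u ∈ S, ∀ v ∈ S, (R'.arc u ∩ R'.arc v).Nonempty) →
    (⋂ v ∈ S, R'.arc v).Nonempty

/-- The partial representation is normal. -/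
def Normal (R' : PartialCARep G L) : Prop :=
  ∀ u ∈ R'.pre, ∀ v ∈ R'.pre, u ≠ v → IsPreconnected (R'.arc u ∩ R'.arc v)

/-- The partial representation is proper. -/
def Proper (R' : PartialCARep G L) : Prop :=
  ∀ u ∈ R'.pre, ∀ v ∈ R'.pre, ¬ R'.arc u ⊂ R'.arc v

/-- `Pre(C)`: the set of predrawn arcs of vertices of `C`. -/
def PreArcs (R' : PartialCARep G L) (C : Set V) : Set (Set (AddCircle L)) :=
  {A | ∃ v ∈ R'.pre ∩ C, A = R'.arc v}

/-- All predrawn arcs. -/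
def AllArcs (R' : PartialCARep G L) : Set (Set (AddCircle L)) :=
  {A | ∃ v ∈ R'.pre, A = R'.arc v}

/-- `Reg⁺(C)`: the intersection of the arcs of `Pre(C)` (the whole circle if
`Pre(C) = ∅`). -/
def RegPlus (R' : PartialCARep G L) (C : Set V) : Set (AddCircle L) := ⋂₀ R'.PreArcs C

/-- `Reg⁻(C)`: the union of the predrawn arcs not in `Pre(C)`. -/
def RegMinus (R' : PartialCARep G L) (C : Set V) : Set (AddCircle L) :=
  ⋃₀ (R'.AllArcs \ R'.PreArcs C)

/-- The region `Reg(C) = Reg⁺(C) \ Reg⁻(C)`. -/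
def Reg (R' : PartialCARep G L) (C : Set V) : Set (AddCircle L) :=
  R'.RegPlus C \ R'.RegMinus C

/-- `J` is a gap of `C`: a connected component of the complement of `Reg(C)`. -/
def IsGap (R' : PartialCARep G L) (C : Set V) (J : Set (AddCircle L)) : Prop :=
  ∃ x ∈ (R'.Reg C)ᶜ, J = connectedComponentIn (R'.Reg C)ᶜ x

end PartialCARep

/-- `R` extends the partial representation `R'`: predrawn vertices keep their arcs. -/
def CARep.Extends {V : Type*} {G : SimpleGraph V} {L : ℝ}
    (R : CARep G L) (R' : PartialCARep G L) : Prop :=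
  ∀ v ∈ R'.pre, R.arc v = R'.arc v

/-- An interval representation of `G`: closed intervals `[lo v, hi v]` on the real
line, intersecting iff the vertices are adjacent. -/
structure IntervalRep {V : Type*} (G : SimpleGraph V) where
  lo : V → ℝ
  hi : V → ℝ
  lo_le_hi : ∀ v, lo v ≤ hi v
  inter_iff : ∀ u v : V, u ≠ v →
    ((Set.Icc (lo u) (hi u) ∩ Set.Icc (lo v) (hi v)).Nonempty ↔ G.Adj u v)

/-- The interval of vertex `v`. -/
def IntervalRep.itv {V : Type*} {G : SimpleGraph V} (R : IntervalRep G) (v : V) : Set ℝ :=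
  Set.Icc (R.lo v) (R.hi v)

/-- `C` is a maximal clique of `G`. -/
def IsMaxClique {V : Type*} (G : SimpleGraph V) (C : Set V) : Prop :=
  G.IsClique C ∧ ∀ D : Set V, G.IsClique D → C ⊆ D → C = D

/-- The closed neighborhood `N[v]`. -/
def closedNbhd {V : Type*} (G : SimpleGraph V) (v : V) : Set V :=
  insert v {u | G.Adj v u}

/-- `v` is a universal vertex: adjacent to all other vertices. -/
def IsUniversalVertex {V : Type*} (G : SimpleGraph V) (v : V) : Prop :=
  ∀ w, w ≠ v → G.Adj v w

/-- `u, w` form a universal pair: they are adjacent and every vertex is adjacent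
to `u` or to `w`. -/
def IsUniversalPair {V : Type*} (G : SimpleGraph V) (u w : V) : Prop :=
  G.Adj u w ∧ ∀ x, G.Adj u x ∨ G.Adj w x

/-- The cyclic interval of length `m` starting at `a` in `ZMod k`. -/
def ZInterval {k : ℕ} (a : ZMod k) (m : ℕ) : Set (ZMod k) :=
  {x | ∃ i : ℕ, i < m ∧ x = a + (i : ZMod k)}

/-- `T` is consecutive in the cyclic ordering induced by the labelling `f`. -/
def CyclicConsec {α : Type*} {k : ℕ} (f : α → ZMod k) (T : Set α) : Prop :=
  ∃ (a : ZMod k) (m : ℕ), T = f ⁻¹' ZInterval a m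

/-- The cyclic position (in `ZMod k`) of an element under the enumeration `e`;
this turns the linear ordering `e` into a cyclic ordering. -/
def zOrd {α : Type*} {k : ℕ} (e : α ≃ Fin k) (x : α) : ZMod k := ((e x : ℕ) : ZMod k)

/-- Cyclic betweenness in `ZMod k`: starting at `a` and going forward one meets
`b` and then `c` within one revolution. -/
def ZBtw {k : ℕ} (a b c : ZMod k) : Prop :=
  ∃ s t : ℕ, s ≤ t ∧ t < k ∧ b = a + (s : ZMod k) ∧ c = a + (t : ZMod k)

/-- Cyclic betweenness on the circle: starting at `a` and going clockwise one meets
`b` and then `c` within one revolution. -/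
def CBtw (L : ℝ) (a b c : AddCircle L) : Prop :=
  ∃ s t : ℝ, 0 ≤ s ∧ s ≤ t ∧ t < L ∧ b = a + (s : AddCircle L) ∧ c = a + (t : AddCircle L)

/-- The position of the point `x` in the linear order of circle points obtained by
cutting the circle at the point `p`: the unique `s ∈ [0, L)` with `x = p + s`. -/
noncomputable def circPos (L : ℝ) (hL : 0 < L) (p x : AddCircle L) : ℝ :=
  haveI : Fact (0 < L) := ⟨hL⟩
  ((AddCircle.equivIco L 0) (x - p) : ℝ)

/-- Two arcs are in non-normal position: their intersection is nonempty and
disconnected. -/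
def NonNormalPos {L : ℝ} (A B : Set (AddCircle L)) : Prop :=
  (A ∩ B).Nonempty ∧ ¬ IsPreconnected (A ∩ B)

namespace CircPos

variable {L : ℝ} (hL : 0 < L)

lemma mem_Ico (p x : AddCircle L) : circPos L hL p x ∈ Set.Ico (0:ℝ) L := by
  haveI : Fact (0 < L) := ⟨hL⟩
  have := ((AddCircle.equivIco L 0) (x - p)).2
  simpa [circPos] using this

lemma add_coe (p x : AddCircle L) : p + ((circPos L hL p x : ℝ) : AddCircle L) = x := by
  haveI : Fact (0 < L) := ⟨hL⟩
  have : (((AddCircle.equivIco L 0) (x - p) : ℝ) : AddCircle L) = x - p :=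
    (AddCircle.equivIco L 0).symm_apply_apply (x - p)
  rw [circPos, this]; abel

lemma eq_of_mem (p : AddCircle L) {s : ℝ} (hs : s ∈ Set.Ico (0:ℝ) L) :
    circPos L hL p (p + (s : AddCircle L)) = s := by
  haveI : Fact (0 < L) := ⟨hL⟩
  have h1 := mem_Ico hL p (p + (s : AddCircle L))
  have h2 := add_coe hL p (p + (s : AddCircle L))
  have h3 : ((circPos L hL p (p + (s : AddCircle L)) : ℝ) : AddCircle L) = (s : AddCircle L) := by
    have := h2
    apply_fun (fun y => y - p) at this
    simpa [add_comm, add_sub_cancel_left] using this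
  rw [AddCircle.coe_eq_coe_iff_of_mem_Ico (a := (0:ℝ)) (p := L)
    (by simpa using h1) (by simpa using hs)] at h3
  exact h3

lemma self (p : AddCircle L) : circPos L hL p p = 0 := by
  have := eq_of_mem hL p (s := 0) (by simpa using hL)
  simpa using this

lemma inj {p x y : AddCircle L} (h : circPos L hL p x = circPos L hL p y) : x = y := by
  have hx := add_coe hL p x
  have hy := add_coe hL p y
  rw [← hx, ← hy, h]

lemma eq_zero_iff {p x : AddCircle L} : circPos L hL p x = 0 ↔ x = p := by
  constructor
  · intro h
    have h2 := add_coe hL p x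
    rw [h] at h2
    simpa using h2.symm
  · rintro rfl; exact self hL _

lemma mem_arc_iff {t x : AddCircle L} {l : ℝ} (hl0 : 0 ≤ l) (hlL : l < L) :
    x ∈ Arc L t l ↔ circPos L hL t x ≤ l := by
  constructor
  · rintro ⟨s, hs0, hsl, rfl⟩
    rw [eq_of_mem hL t ⟨hs0, lt_of_le_of_lt hsl hlL⟩]; exact hsl
  · intro h
    exact ⟨circPos L hL t x, (mem_Ico hL t x).1, h, (add_coe hL t x).symm⟩

/-- Base change: position of `w` seen from `t`, in terms of positions seen from `p`. -/
lemma base_change (p t w : AddCircle L) :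
    (circPos L hL p t ≤ circPos L hL p w ∧
      circPos L hL t w = circPos L hL p w - circPos L hL p t) ∨
    (circPos L hL p w < circPos L hL p t ∧
      circPos L hL t w = circPos L hL p w - circPos L hL p t + L) := by
  set a := circPos L hL p t with ha
  set d := circPos L hL p w with hd
  have hamem := mem_Ico hL p t
  have hdmem := mem_Ico hL p w
  have ht : t = p + (a : AddCircle L) := (add_coe hL p t).symm
  have hw : w = p + (d : AddCircle L) := (add_coe hL p w).symm
  rcases le_or_gt a d with h | h
  · left
    refine ⟨h, ?_⟩
    have : w = t + ((d - a : ℝ) : AddCircle L) := by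
      rw [ht, hw, add_assoc, ← AddCircle.coe_add]
      norm_num
    rw [this, eq_of_mem hL t ⟨by linarith, by have := hamem.1; have := hdmem.2; linarith⟩]
  · right
    refine ⟨h, ?_⟩
    have : w = t + ((d - a + L : ℝ) : AddCircle L) := by
      have key : ((a + (d - a + L) : ℝ) : AddCircle L) = ((d : ℝ) : AddCircle L) := by
        rw [show a + (d - a + L) = d + L by ring]
        exact AddCircle.coe_add_period L d
      rw [ht, hw, add_assoc, ← AddCircle.coe_add, key]
    rw [this, eq_of_mem hL t
      ⟨by have := hdmem.1; have := hamem.2; linarith,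
       by have := hdmem.1; have := hamem.2; have := hdmem.2; linarith⟩]

lemma isPreconnected_arc (t : AddCircle L) (l : ℝ) : IsPreconnected (Arc L t l) := by
  have : Arc L t l = (fun s : ℝ => t + (s : AddCircle L)) '' Set.Icc 0 l := by
    ext x
    simp only [Arc, mem_setOf_eq, mem_image, mem_Icc]
    constructor
    · rintro ⟨s, h1, h2, rfl⟩; exact ⟨s, ⟨h1, h2⟩, rfl⟩
    · rintro ⟨s, ⟨h1, h2⟩, rfl⟩; exact ⟨s, h1, h2, rfl⟩
  rw [this]
  exact isPreconnected_Icc.image _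
    (Continuous.continuousOn (continuous_const.add (AddCircle.continuous_mk' L)))

/-- Interleaving lemma: an arc containing `p0` and `p1` contains `q0` or `q1` if
`p0, q0, p1, q1` appear in strict cyclic order. -/
lemma interleave {p0 q0 p1 q1 t : AddCircle L} {l : ℝ} (hl0 : 0 ≤ l) (hlL : l < L)
    (h0 : 0 < circPos L hL p0 q0)
    (h1 : circPos L hL p0 q0 < circPos L hL p0 p1)
    (h2 : circPos L hL p0 p1 < circPos L hL p0 q1)
    (hp0 : p0 ∈ Arc L t l) (hp1 : p1 ∈ Arc L t l) :
    q0 ∈ Arc L t l ∨ q1 ∈ Arc L t l := by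
  have hq1L := (mem_Ico hL p0 q1).2
  rw [mem_arc_iff hL hl0 hlL] at hp0 hp1
  rw [mem_arc_iff hL hl0 hlL, mem_arc_iff hL hl0 hlL]
  rcases eq_or_lt_of_le (mem_Ico hL p0 t).1 with haz | hapos
  · -- t = p0
    have htp : t = p0 := eq_zero_iff hL |>.mp haz.symm
    subst htp
    left
    have e1 := base_change hL t t p1
    rw [self hL t] at e1
    have e0 := base_change hL t t q0
    rw [self hL t] at e0
    have hm1 := (mem_Ico hL t p1).1
    have hm0 := (mem_Ico hL t q0).1
    rcases e0 with ⟨_, e0⟩ | ⟨hc, _⟩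
    · rcases e1 with ⟨_, e1⟩ | ⟨hc, _⟩
      · rw [e0]; linarith
      · linarith
    · linarith
  · -- 0 < circPos p0 t
    rcases le_or_gt (circPos L hL p0 t) (circPos L hL p0 p1) with hle | hgt
    · -- q1 ∈ arc
      right
      have hbp0 := base_change hL p0 t p0
      rw [self hL p0] at hbp0
      have hp0e : circPos L hL t p0 = L - circPos L hL p0 t := by
        rcases hbp0 with ⟨hc, _⟩ | ⟨_, e⟩
        · linarith
        · rw [e]; ring
      rcases base_change hL p0 t q1 with ⟨_, e⟩ | ⟨hc, _⟩
      · rw [e]; rw [hp0e] at hp0; linarith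
      · linarith
    · -- q0 ∈ arc
      left
      have haq0 : circPos L hL p0 q0 < circPos L hL p0 t := lt_trans h1 hgt
      rcases base_change hL p0 t q0 with ⟨hc, _⟩ | ⟨_, e0⟩
      · linarith
      · rcases base_change hL p0 t p1 with ⟨hc, _⟩ | ⟨_, e1⟩
        · linarith
        · rw [e0]; rw [e1] at hp1; linarith

end CircPos

-- continuation loaded after infra (will be concatenated)
section ZHelp

lemma zbtw_iff {k : ℕ} (hk : k ≠ 0) (a b c : ZMod k) :
    ZBtw a b c ↔ (b - a).val ≤ (c - a).val := by
  haveI : NeZero k := ⟨hk⟩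
  constructor
  · rintro ⟨s, t, hst, htk, rfl, rfl⟩
    have hs : s < k := lt_of_le_of_lt hst htk
    rw [add_sub_cancel_left, add_sub_cancel_left, ZMod.val_cast_of_lt hs,
      ZMod.val_cast_of_lt htk]
    exact hst
  · intro h
    refine ⟨(b - a).val, (c - a).val, h, ZMod.val_lt _, ?_, ?_⟩
    · rw [ZMod.natCast_val, ZMod.cast_id]; ring
    · rw [ZMod.natCast_val, ZMod.cast_id]; ring

lemma zmod_val_inj {k : ℕ} (hk : k ≠ 0) {a b : ZMod k} (h : a.val = b.val) : a = b := by
  haveI : NeZero k := ⟨hk⟩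
  have ha : ((a.val : ℕ) : ZMod k) = a := by rw [ZMod.natCast_val, ZMod.cast_id]
  have hb : ((b.val : ℕ) : ZMod k) = b := by rw [ZMod.natCast_val, ZMod.cast_id]
  rw [← ha, ← hb, h]

lemma zOrd_inj {α : Type*} {k : ℕ} (e : α ≃ Fin k) : Function.Injective (zOrd e) := by
  intro x y h
  have hk : k ≠ 0 := (e x).pos.ne'
  haveI : NeZero k := ⟨hk⟩
  apply e.injective
  have h1 := congrArg ZMod.val h
  unfold zOrd at h1
  rw [ZMod.val_cast_of_lt (e x).2, ZMod.val_cast_of_lt (e y).2] at h1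
  exact Fin.ext h1

lemma cbtw_iff {L : ℝ} (hL : 0 < L) (p b c : AddCircle L) :
    CBtw L p b c ↔ circPos L hL p b ≤ circPos L hL p c := by
  constructor
  · rintro ⟨s, t, hs0, hst, htL, rfl, rfl⟩
    rw [CircPos.eq_of_mem hL p ⟨hs0, lt_of_le_of_lt hst htL⟩,
      CircPos.eq_of_mem hL p ⟨le_trans hs0 hst, htL⟩]
    exact hst
  · intro h
    refine ⟨circPos L hL p b, circPos L hL p c, (CircPos.mem_Ico hL p b).1, h,
      (CircPos.mem_Ico hL p c).2, (CircPos.add_coe hL p b).symm, (CircPos.add_coe hL p c).symm⟩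

end ZHelp

section Regions

variable {V : Type*} {G : SimpleGraph V} {L : ℝ}

lemma preArcs_subset_allArcs (R' : PartialCARep G L) (C : Set V) :
    R'.PreArcs C ⊆ R'.AllArcs := by
  rintro A ⟨v, ⟨h1, _⟩, rfl⟩
  exact ⟨v, h1, rfl⟩

lemma reg_eq_of_preArcs_eq (R' : PartialCARep G L) {C D : Set V}
    (h : R'.PreArcs C = R'.PreArcs D) : R'.Reg C = R'.Reg D := by
  unfold PartialCARep.Reg PartialCARep.RegPlus PartialCARep.RegMinus
  rw [h]

/-- The clique point of a maximal clique lies in its region. -/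
lemma cp_mem_reg (R' : PartialCARep G L) (R : CARep G L) (hext : R.Extends R')
    {C : Set V} (hC : IsMaxClique G C) {x : AddCircle L}
    (hx : ∀ v ∈ C, x ∈ R.arc v) : x ∈ R'.Reg C := by
  constructor
  · -- x ∈ RegPlus C
    intro A hA
    obtain ⟨v, ⟨hvpre, hvC⟩, rfl⟩ := hA
    rw [← hext v hvpre]
    exact hx v hvC
  · -- x ∉ RegMinus C
    rintro ⟨A, ⟨hAall, hAnot⟩, hxA⟩
    obtain ⟨u, hupre, rfl⟩ := hAall
    have huC : u ∈ C := by
      have hclique : G.IsClique (insert u C) := by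
        rw [SimpleGraph.isClique_iff]
        intro a ha b hb hab
        have key : ∀ w ∈ C, w ≠ u → G.Adj u w := by
          intro w hw hwu
          refine (R.inter_iff u w (Ne.symm hwu)).1 ⟨x, ?_, hx w hw⟩
          show x ∈ R.arc u
          rw [hext u hupre]
          exact hxA
        rcases Set.mem_insert_iff.1 ha with rfl | haC
        · rcases Set.mem_insert_iff.1 hb with rfl | hbC
          · exact absurd rfl hab
          · exact key b hbC (Ne.symm hab)
        · rcases Set.mem_insert_iff.1 hb with rfl | hbC
          · exact (key a haC hab).symm
          · exact hC.1 haC hbC hab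
      have := hC.2 _ hclique (Set.subset_insert u C)
      rw [this]
      exact Set.mem_insert u C
    exact hAnot ⟨u, ⟨hupre, huC⟩, rfl⟩

end Regions

/-- Let `R` be a normal Helly circular-arc representation of `G`
extending the partial representation `R'`, with a choice of distinct clique points,
and let `⊴` be the derived cyclic ordering of the maximal cliques (given by the enumeration
`e`, which agrees with the circular order of the clique points).  Then for every gap `J`
of a maximal clique `D`, the set `S_J = {C : Reg(C) ⊆ J}` is consecutive in `⊴`. -/
theorem gap_set_consecutive {V : Type*} [Fintype V] (G : SimpleGraph V)
    (L : ℝ) (R' : PartialCARep G L) (R : CARep G L)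
    (hext : R.Extends R') (hN : R.Normal) (hH : R.Helly)
    (cp : {C : Set V // IsMaxClique G C} → AddCircle L)
    (hcp : ∀ C : {C : Set V // IsMaxClique G C}, ∀ v ∈ C.1, cp C ∈ R.arc v)
    (hcpinj : Function.Injective cp)
    (k : ℕ) (e : {C : Set V // IsMaxClique G C} ≃ Fin k)
    (he : ∀ C₁ C₂ C₃ : {C : Set V // IsMaxClique G C},
      C₁ ≠ C₂ → C₂ ≠ C₃ → C₁ ≠ C₃ →
      (ZBtw (zOrd e C₁) (zOrd e C₂) (zOrd e C₃) ↔ CBtw L (cp C₁) (cp C₂) (cp C₃)))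
    (D : Set V) (hD : IsMaxClique G D) (J : Set (AddCircle L)) (hJ : R'.IsGap D J) :
    CyclicConsec (zOrd e) {C : {C : Set V // IsMaxClique G C} | R'.Reg C.1 ⊆ J} := by
  classical
  have hL : 0 < L := R.hL
  haveI : Fact (0 < L) := ⟨hL⟩
  set D' : {C : Set V // IsMaxClique G C} := ⟨D, hD⟩ with hD'def
  -- clique points are in the regions
  have hcpreg : ∀ C : {C : Set V // IsMaxClique G C}, cp C ∈ R'.Reg C.1 := fun C =>
    cp_mem_reg R' R hext C.2 (hcp C)
  obtain ⟨x₀, hx₀U, hJeq⟩ := hJ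
  have hJU : J ⊆ (R'.Reg D)ᶜ := by rw [hJeq]; exact connectedComponentIn_subset _ _
  have hpDreg : cp D' ∈ R'.Reg D := hcpreg D'
  have hpJ : cp D' ∉ J := fun h => (hJU h) hpDreg
  -- key: if the clique point of C lies in J then the whole region of C lies in J
  have key : ∀ C : {C : Set V // IsMaxClique G C}, C ≠ D' → cp C ∈ J → R'.Reg C.1 ⊆ J := by
    intro C hCD hcpJ
    have hcpU : cp C ∉ R'.Reg D := hJU hcpJ
    -- regions of C and D are disjoint
    have hPreNe : R'.PreArcs C.1 ≠ R'.PreArcs D := by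
      intro hPre
      exact hcpU ((reg_eq_of_preArcs_eq R' hPre) ▸ hcpreg C)
    have hdisj : ∀ w, w ∈ R'.Reg C.1 → w ∉ R'.Reg D := by
      intro w h1 h2
      apply hPreNe
      ext A
      constructor
      · intro hA
        by_contra hnot
        exact h2.2 ⟨A, ⟨preArcs_subset_allArcs R' _ hA, hnot⟩, h1.1 A hA⟩
      · intro hA
        by_contra hnot
        exact h1.2 ⟨A, ⟨preArcs_subset_allArcs R' _ hA, hnot⟩, h2.1 A hA⟩
    have hJC : J = connectedComponentIn (R'.Reg D)ᶜ (cp C) := by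
      rw [hJeq]
      exact connectedComponentIn_eq (hJeq ▸ hcpJ)
    intro z hz
    by_cases hzx : z = cp C
    · rw [hzx]; exact hcpJ
    have hzU : z ∉ R'.Reg D := hdisj z hz
    have hδIco := CircPos.mem_Ico hL (cp C) z
    have hδ0 : 0 < circPos L hL (cp C) z := by
      rcases eq_or_lt_of_le hδIco.1 with h | h
      · exact absurd (CircPos.eq_zero_iff hL |>.mp h.symm) hzx
      · exact h
    have hδL : circPos L hL (cp C) z < L := hδIco.2
    have hcpA1 : cp C ∈ Arc L (cp C) (circPos L hL (cp C) z) := by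
      rw [CircPos.mem_arc_iff hL (le_of_lt hδ0) hδL, CircPos.self hL]
      exact le_of_lt hδ0
    have hzA1 : z ∈ Arc L (cp C) (circPos L hL (cp C) z) := by
      rw [CircPos.mem_arc_iff hL (le_of_lt hδ0) hδL]
    have hσzcp : circPos L hL z (cp C) = L - circPos L hL (cp C) z := by
      rcases CircPos.base_change hL (cp C) z (cp C) with ⟨hle, _⟩ | ⟨_, h⟩
      · rw [CircPos.self hL] at hle; linarith
      · rw [CircPos.self hL] at h; rw [h]; ring
    have hLd0 : 0 ≤ L - circPos L hL (cp C) z := by linarith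
    have hLdL : L - circPos L hL (cp C) z < L := by linarith
    have hzA2 : z ∈ Arc L z (L - circPos L hL (cp C) z) := by
      rw [CircPos.mem_arc_iff hL hLd0 hLdL, CircPos.self hL]
      exact hLd0
    have hcpA2 : cp C ∈ Arc L z (L - circPos L hL (cp C) z) := by
      rw [CircPos.mem_arc_iff hL hLd0 hLdL, hσzcp]
    by_cases h1 : (Arc L (cp C) (circPos L hL (cp C) z) ∩ R'.Reg D).Nonempty
    · by_cases h2 : (Arc L z (L - circPos L hL (cp C) z) ∩ R'.Reg D).Nonempty
      · -- contradiction via interleaving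
        exfalso
        obtain ⟨y1, hy1A, hy1D⟩ := h1
        obtain ⟨y2, hy2A, hy2D⟩ := h2
        have hy1cp : y1 ≠ cp C := fun h => hdisj (cp C) (hcpreg C) (h ▸ hy1D)
        have hy1z : y1 ≠ z := fun h => hdisj z hz (h ▸ hy1D)
        have hy2cp : y2 ≠ cp C := fun h => hdisj (cp C) (hcpreg C) (h ▸ hy2D)
        have hy2z : y2 ≠ z := fun h => hdisj z hz (h ▸ hy2D)
        have hy1le : circPos L hL (cp C) y1 ≤ circPos L hL (cp C) z :=
          (CircPos.mem_arc_iff hL (le_of_lt hδ0) hδL).1 hy1A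
        have hy1pos : 0 < circPos L hL (cp C) y1 := by
          rcases eq_or_lt_of_le (CircPos.mem_Ico hL (cp C) y1).1 with h | h
          · exact absurd (CircPos.eq_zero_iff hL |>.mp h.symm) hy1cp
          · exact h
        have hy1lt : circPos L hL (cp C) y1 < circPos L hL (cp C) z :=
          lt_of_le_of_ne hy1le (fun h => hy1z (CircPos.inj hL h))
        have hy2arc : circPos L hL z y2 ≤ L - circPos L hL (cp C) z :=
          (CircPos.mem_arc_iff hL hLd0 hLdL).1 hy2A
        have hy2gt : circPos L hL (cp C) z < circPos L hL (cp C) y2 := by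
          rcases CircPos.base_change hL (cp C) z y2 with ⟨hle, _⟩ | ⟨_, heq⟩
          · exact lt_of_le_of_ne hle (fun h => hy2z (CircPos.inj hL h.symm))
          · exfalso
            rw [heq] at hy2arc
            have h0 : circPos L hL (cp C) y2 ≤ 0 := by linarith
            have h0' : circPos L hL (cp C) y2 = 0 :=
              le_antisymm h0 (CircPos.mem_Ico hL (cp C) y2).1
            exact hy2cp (CircPos.eq_zero_iff hL |>.mp h0')
        have hy2L : circPos L hL (cp C) y2 < L := (CircPos.mem_Ico hL (cp C) y2).2
        -- split on which family has an extra arc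
        by_cases hPC : ∃ A ∈ R'.PreArcs C.1, A ∉ R'.PreArcs D
        · obtain ⟨A, hAC, hAD⟩ := hPC
          have hcpA : cp C ∈ A := (hcpreg C).1 A hAC
          have hzA : z ∈ A := hz.1 A hAC
          have hAall : A ∈ R'.AllArcs := preArcs_subset_allArcs R' _ hAC
          obtain ⟨v, ⟨hvpre, _⟩, hAeq⟩ := hAC
          have hlen0 := R'.len_nonneg v hvpre
          have hlenL := R'.len_lt v hvpre
          have hmem := CircPos.interleave hL hlen0 hlenL hy1pos hy1lt hy2gt
            (by rw [hAeq] at hcpA; exact hcpA) (by rw [hAeq] at hzA; exact hzA)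
          rcases hmem with hy | hy
          · exact hy1D.2 ⟨A, ⟨hAall, hAD⟩, by rw [hAeq]; exact hy⟩
          · exact hy2D.2 ⟨A, ⟨hAall, hAD⟩, by rw [hAeq]; exact hy⟩
        · push_neg at hPC
          have hPD : ∃ A ∈ R'.PreArcs D, A ∉ R'.PreArcs C.1 := by
            by_contra h
            push_neg at h
            exact hPreNe (Set.Subset.antisymm hPC h)
          obtain ⟨A, hAD, hAC⟩ := hPD
          have hy1A' : y1 ∈ A := hy1D.1 A hAD
          have hy2A' : y2 ∈ A := hy2D.1 A hAD
          have hAall : A ∈ R'.AllArcs := preArcs_subset_allArcs R' _ hAD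
          obtain ⟨v, ⟨hvpre, _⟩, hAeq⟩ := hAD
          have hlen0 := R'.len_nonneg v hvpre
          have hlenL := R'.len_lt v hvpre
          -- coordinates based at y1
          have hz' : circPos L hL y1 z =
              circPos L hL (cp C) z - circPos L hL (cp C) y1 := by
            rcases CircPos.base_change hL (cp C) y1 z with ⟨_, heq⟩ | ⟨hlt, _⟩
            · exact heq
            · linarith
          have hy2' : circPos L hL y1 y2 =
              circPos L hL (cp C) y2 - circPos L hL (cp C) y1 := by
            rcases CircPos.base_change hL (cp C) y1 y2 with ⟨_, heq⟩ | ⟨hlt, _⟩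
            · exact heq
            · linarith
          have hcp' : circPos L hL y1 (cp C) = L - circPos L hL (cp C) y1 := by
            rcases CircPos.base_change hL (cp C) y1 (cp C) with ⟨hle, _⟩ | ⟨_, heq⟩
            · rw [CircPos.self hL] at hle; linarith
            · rw [CircPos.self hL] at heq; rw [heq]; ring
          have hmem := CircPos.interleave hL (p0 := y1) (q0 := z) (p1 := y2)
            (q1 := cp C) hlen0 hlenL
            (by rw [hz']; linarith)
            (by rw [hz', hy2']; linarith)
            (by rw [hy2', hcp']; linarith)
            (by rw [hAeq] at hy1A'; exact hy1A') (by rw [hAeq] at hy2A'; exact hy2A')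
          rcases hmem with hy | hy
          · exact hz.2 ⟨A, ⟨hAall, hAC⟩, by rw [hAeq]; exact hy⟩
          · exact (hcpreg C).2 ⟨A, ⟨hAall, hAC⟩, by rw [hAeq]; exact hy⟩
      · -- the arc from z to cp C avoids Reg D
        have hA2U : Arc L z (L - circPos L hL (cp C) z) ⊆ (R'.Reg D)ᶜ :=
          fun w hw => Set.mem_compl (fun hwD => h2 ⟨w, hw, hwD⟩)
        have hsub := (CircPos.isPreconnected_arc (L := L) z
          (L - circPos L hL (cp C) z)).subset_connectedComponentIn hzA2 hA2U
        have hcpin : cp C ∈ connectedComponentIn (R'.Reg D)ᶜ z := hsub hcpA2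
        have hcc : connectedComponentIn (R'.Reg D)ᶜ z
            = connectedComponentIn (R'.Reg D)ᶜ (cp C) := connectedComponentIn_eq hcpin
        rw [hJC, ← hcc]
        exact mem_connectedComponentIn (Set.mem_compl hzU)
    · -- the arc from cp C to z avoids Reg D
      have hA1U : Arc L (cp C) (circPos L hL (cp C) z) ⊆ (R'.Reg D)ᶜ :=
        fun w hw => Set.mem_compl (fun hwD => h1 ⟨w, hw, hwD⟩)
      have hsub := (CircPos.isPreconnected_arc (L := L) (cp C)
        (circPos L hL (cp C) z)).subset_connectedComponentIn hcpA1 hA1U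
      rw [hJC]
      exact hsub hzA1
  -- characterization of the set S_J by clique points
  have Tchar : ∀ C : {C : Set V // IsMaxClique G C},
      (R'.Reg C.1 ⊆ J ↔ cp C ∈ J) := by
    intro C
    by_cases hCD : C = D'
    · rw [hCD]
      constructor
      · intro h; exact absurd (h (hcpreg D')) hpJ
      · intro h; exact absurd h hpJ
    · exact ⟨fun h => h (hcpreg C), fun h => key C hCD h⟩
  -- σ-order-convexity of the gap J
  have hordJ : ∀ x ∈ J, ∀ y ∈ J, ∀ z : AddCircle L,
      circPos L hL (cp D') x ≤ circPos L hL (cp D') z →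
      circPos L hL (cp D') z ≤ circPos L hL (cp D') y → z ∈ J := by
    have hJconn : IsPreconnected J := by
      rw [hJeq]; exact isPreconnected_connectedComponentIn
    have hcont : ContinuousOn (circPos L hL (cp D')) J := by
      intro x hx
      have hxp : x ≠ cp D' := fun h => hpJ (h ▸ hx)
      apply ContinuousAt.continuousWithinAt
      have h1 : ContinuousAt (fun y : AddCircle L => y - cp D') x :=
        (continuous_id.sub continuous_const).continuousAt
      have h2 : ContinuousAt (AddCircle.equivIco L 0) (x - cp D') :=
        AddCircle.continuousAt_equivIco L 0 (by simpa [sub_eq_zero] using hxp)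
      have h3 : ContinuousAt
          (fun y : AddCircle L => AddCircle.equivIco L 0 (y - cp D')) x :=
        ContinuousAt.comp (f := fun y : AddCircle L => y - cp D') h2 h1
      have hcomp : ContinuousAt
          (fun y : AddCircle L => ((AddCircle.equivIco L 0 (y - cp D') : ℝ))) x :=
        ContinuousAt.comp
          (f := fun y : AddCircle L => AddCircle.equivIco L 0 (y - cp D'))
          continuous_subtype_val.continuousAt h3
      exact hcomp
    have himg := hJconn.image _ hcont
    have hoc := himg.ordConnected
    intro x hx y hy z h1 h2
    have hmem := hoc.out (Set.mem_image_of_mem _ hx) (Set.mem_image_of_mem _ hy) ⟨h1, h2⟩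
    obtain ⟨w, hwJ, hwz⟩ := hmem
    exact (CircPos.inj hL hwz) ▸ hwJ
  -- final assembly
  have hk : k ≠ 0 := (e D').pos.ne'
  haveI : NeZero k := ⟨hk⟩
  by_cases hTe : {C : {C : Set V // IsMaxClique G C} | R'.Reg C.1 ⊆ J} = ∅
  · refine ⟨0, 0, ?_⟩
    rw [hTe]
    ext C
    simp [ZInterval]
  · have hTne : ({C : {C : Set V // IsMaxClique G C} | R'.Reg C.1 ⊆ J}).Nonempty :=
      Set.nonempty_iff_ne_empty.mpr hTe
    set ζ : {C : Set V // IsMaxClique G C} → ℕ :=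
      fun C => (zOrd e C - zOrd e D').val with hζdef
    have hζinj : Function.Injective ζ := by
      intro C C' h
      apply zOrd_inj e
      have := zmod_val_inj hk h
      have h2 : zOrd e C - zOrd e D' + zOrd e D' = zOrd e C' - zOrd e D' + zOrd e D' := by
        rw [this]
      simpa [sub_add_cancel] using h2
    have hζne : ∀ C, C ≠ D' → ζ C ≠ 0 := by
      intro C hC h0
      have : ζ C = ζ D' := by
        rw [h0, hζdef]; simp [zOrd]
      exact hC (hζinj this)
    have hζeq : ∀ C, zOrd e C = zOrd e D' + (ζ C : ZMod k) := by
      intro C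
      rw [hζdef]
      simp only [ZMod.natCast_val, ZMod.cast_id]
      ring
    -- the bridge between the cyclic orders
    have bridge : ∀ C C' : {C : Set V // IsMaxClique G C}, C ≠ D' → C' ≠ D' → C ≠ C' →
        (ζ C ≤ ζ C' ↔ circPos L hL (cp D') (cp C) ≤ circPos L hL (cp D') (cp C')) := by
      intro C C' hC hC' hCC'
      rw [← cbtw_iff hL (cp D') (cp C) (cp C'),
        ← he D' C C' (Ne.symm hC) hCC' (Ne.symm hC'),
        zbtw_iff hk]
    have hbdd : BddAbove (ζ '' {C : {C : Set V // IsMaxClique G C} | R'.Reg C.1 ⊆ J}) := by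
      have hsub : ζ '' {C : {C : Set V // IsMaxClique G C} | R'.Reg C.1 ⊆ J}
          ⊆ Set.Iic k := by
        rintro _ ⟨C, _, rfl⟩
        exact (ZMod.val_lt _).le
      exact BddAbove.mono hsub bddAbove_Iic
    have hZne : (ζ '' {C : {C : Set V // IsMaxClique G C} | R'.Reg C.1 ⊆ J}).Nonempty :=
      hTne.image ζ
    obtain ⟨C1, hC1T, hC1v⟩ := Nat.sInf_mem hZne
    obtain ⟨C2, hC2T, hC2v⟩ := Nat.sSup_mem hZne hbdd
    set l : ℕ := sInf (ζ '' {C : {C : Set V // IsMaxClique G C} | R'.Reg C.1 ⊆ J}) with hldef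
    set u : ℕ := sSup (ζ '' {C : {C : Set V // IsMaxClique G C} | R'.Reg C.1 ⊆ J}) with hudef
    have hC1D : C1 ≠ D' := by
      intro h
      exact hpJ ((Tchar D').mp (h ▸ hC1T))
    have hC2D : C2 ≠ D' := by
      intro h
      exact hpJ ((Tchar D').mp (h ▸ hC2T))
    have hl1 : 1 ≤ l := Nat.one_le_iff_ne_zero.mpr (hC1v ▸ hζne C1 hC1D)
    have hulk : u < k := hC2v ▸ ZMod.val_lt _
    have hlu : l ≤ u := by
      have hm : u ∈ ζ '' {C : {C : Set V // IsMaxClique G C} | R'.Reg C.1 ⊆ J} :=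
        ⟨C2, hC2T, hC2v⟩
      exact Nat.sInf_le hm
    refine ⟨zOrd e D' + (l : ZMod k), u + 1 - l, ?_⟩
    ext C
    simp only [Set.mem_setOf_eq, Set.mem_preimage, ZInterval]
    constructor
    · intro hC
      have hmC : ζ C ∈ ζ '' {C : {C : Set V // IsMaxClique G C} | R'.Reg C.1 ⊆ J} :=
        ⟨C, hC, rfl⟩
      have h1 : l ≤ ζ C := Nat.sInf_le hmC
      have h2 : ζ C ≤ u := le_csSup hbdd hmC
      refine ⟨ζ C - l, by omega, ?_⟩
      rw [hζeq C]
      rw [show (ζ C : ZMod k) = ((l : ℕ) : ZMod k) + ((ζ C - l : ℕ) : ZMod k) by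
        rw [← Nat.cast_add]; congr 1; omega]
      ring
    · rintro ⟨i, hi, hCi⟩
      have hik : l + i ≤ u := by omega
      have hζC : ζ C = l + i := by
        have hsum : zOrd e C - zOrd e D' = ((l + i : ℕ) : ZMod k) := by
          rw [hCi]
          push_cast
          ring
        rw [hζdef]
        simp only
        rw [hsum, ZMod.val_cast_of_lt (by omega)]
      have hCD : C ≠ D' := by
        intro h
        have : ζ C = 0 := by rw [h, hζdef]; simp [zOrd]
        omega
      by_cases hCC1 : C = C1
      · rw [hCC1]; exact hC1T
      by_cases hCC2 : C = C2
      · rw [hCC2]; exact hC2T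
      have hC1C2 : C1 ≠ C2 := by
        intro h
        have : l = u := by rw [← hC1v, ← hC2v, h]
        have : ζ C = l := by omega
        exact hCC1 (hζinj (by rw [this, hC1v]))
      have hs1 : circPos L hL (cp D') (cp C1) ≤ circPos L hL (cp D') (cp C) :=
        (bridge C1 C hC1D hCD (fun h => hCC1 h.symm)).mp (by omega)
      have hs2 : circPos L hL (cp D') (cp C) ≤ circPos L hL (cp D') (cp C2) :=
        (bridge C C2 hCD hC2D hCC2).mp (by omega)
      exact (Tchar C).mpr (hordJ (cp C1) ((Tchar C1).mp hC1T) (cp C2)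
        ((Tchar C2).mp hC2T) (cp C) hs1 hs2)
end
end

section
/- Let R' be a partial normal Helly circular-arc representation of a graph G (that is, R' itself is a normal and Helly circular-arc representation of an induced subgraph of G). Then there exists a maximal clique D of G with Reg(D) = Reg⁺(D); in particular Reg(D) is connected, i.e., D has a single island. -/
open Set

noncomputable section

private lemma arc_eq_image' (L : ℝ) (t : AddCircle L) (len : ℝ) :
    Arc L t len = (fun s : ℝ => t + (s : AddCircle L)) '' Icc 0 len := by
  ext x
  constructor
  · rintro ⟨s, h0, h1, rfl⟩; exact ⟨s, ⟨h0, h1⟩, rfl⟩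
  · rintro ⟨s, ⟨h0, h1⟩, rfl⟩; exact ⟨s, h0, h1, rfl⟩

private lemma isPreconnected_arc' (L : ℝ) (t : AddCircle L) (len : ℝ) :
    IsPreconnected (Arc L t len) := by
  rw [arc_eq_image']
  exact isPreconnected_Icc.image _
    (continuous_const.add (AddCircle.continuous_mk' L)).continuousOn

private lemma key_preconnected {V : Type*} {G : SimpleGraph V} {L : ℝ}
    (R' : PartialCARep G L) (hN : R'.Normal) (C' : Set V) (hC'pre : C' ⊆ R'.pre)
    (v0 : V) (hv0 : v0 ∈ C') :
    IsPreconnected (⋂ v ∈ C', R'.arc v) := by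
  haveI : Fact (0 < L) := ⟨R'.hL⟩
  set ψ : ℝ → AddCircle L := fun s => R'.tail v0 + (s : AddCircle L) with hψ
  have hψc : Continuous ψ := continuous_const.add (AddCircle.continuous_mk' L)
  have hℓ0 : 0 ≤ R'.len v0 := R'.len_nonneg v0 (hC'pre hv0)
  have hℓL : R'.len v0 < L := R'.len_lt v0 (hC'pre hv0)
  have harc0 : R'.arc v0 = ψ '' Icc 0 (R'.len v0) := arc_eq_image' L _ _
  have hinj : InjOn ψ (Icc 0 (R'.len v0)) := by
    intro a ha b hb hab
    have hco : (a : AddCircle L) = b := add_left_cancel hab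
    exact (AddCircle.coe_eq_coe_iff_of_mem_Ico (p := L) (a := 0)
      (by simpa using ⟨ha.1, lt_of_le_of_lt ha.2 hℓL⟩)
      (by simpa using ⟨hb.1, lt_of_le_of_lt hb.2 hℓL⟩)).mp hco
  set E : V → Set ℝ := fun w => Icc 0 (R'.len v0) ∩ ψ ⁻¹' (R'.arc w) with hE
  have hEord : ∀ w ∈ C', OrdConnected (E w) := by
    intro w hw
    constructor
    intro s1 hs1 s2 hs2 s hs
    have hsI : s ∈ Icc 0 (R'.len v0) := ⟨hs1.1.1.trans hs.1, hs.2.trans hs2.1.2⟩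
    refine ⟨hsI, ?_⟩
    by_contra hsw
    have hpc : IsPreconnected (R'.arc w ∩ R'.arc v0) := by
      rcases eq_or_ne w v0 with rfl | hne
      · simpa [PartialCARep.arc] using isPreconnected_arc' L (R'.tail w) (R'.len w)
      · exact hN w (hC'pre hw) v0 (hC'pre hv0) hne
    have hA1 : IsClosed (ψ '' Icc 0 s) := ((isCompact_Icc).image hψc).isClosed
    have hA2 : IsClosed (ψ '' Icc s (R'.len v0)) := ((isCompact_Icc).image hψc).isClosed
    have hcov : R'.arc w ∩ R'.arc v0 ⊆ ψ '' Icc 0 s ∪ ψ '' Icc s (R'.len v0) := by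
      intro x hx
      have hx0 : x ∈ ψ '' Icc 0 (R'.len v0) := harc0 ▸ hx.2
      obtain ⟨r, hr, rfl⟩ := hx0
      rcases le_total r s with h | h
      · exact Or.inl ⟨r, ⟨hr.1, h⟩, rfl⟩
      · exact Or.inr ⟨r, ⟨h, hr.2⟩, rfl⟩
    have hn1 : ((R'.arc w ∩ R'.arc v0) ∩ ψ '' Icc 0 s).Nonempty :=
      ⟨ψ s1, ⟨hs1.2, harc0 ▸ ⟨s1, hs1.1, rfl⟩⟩, ⟨s1, ⟨hs1.1.1, hs.1⟩, rfl⟩⟩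
    have hn2 : ((R'.arc w ∩ R'.arc v0) ∩ ψ '' Icc s (R'.len v0)).Nonempty :=
      ⟨ψ s2, ⟨hs2.2, harc0 ▸ ⟨s2, hs2.1, rfl⟩⟩, ⟨s2, ⟨hs.2, hs2.1.2⟩, rfl⟩⟩
    obtain ⟨x, hxwv, hx1, hx2⟩ :=
      isPreconnected_closed_iff.mp hpc _ _ hA1 hA2 hcov hn1 hn2
    obtain ⟨a, ha, rfl⟩ := hx1
    obtain ⟨b, hb, hab⟩ := hx2
    have haI : a ∈ Icc 0 (R'.len v0) := ⟨ha.1, ha.2.trans hsI.2⟩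
    have hbI : b ∈ Icc 0 (R'.len v0) := ⟨hsI.1.trans hb.1, hb.2⟩
    have hba : b = a := hinj hbI haI hab
    have hsa : a = s := le_antisymm ha.2 (hba ▸ hb.1)
    exact hsw (hsa ▸ hxwv.1)
  have hkey : (⋂ v ∈ C', R'.arc v) = ψ '' (⋂ w ∈ C', E w) := by
    ext x
    constructor
    · intro hx
      have hx' : ∀ v ∈ C', x ∈ R'.arc v := fun v hv => mem_iInter₂.mp hx v hv
      have hx0 : x ∈ ψ '' Icc 0 (R'.len v0) := harc0 ▸ hx' v0 hv0
      obtain ⟨s, hsI, rfl⟩ := hx0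
      exact ⟨s, mem_iInter₂.mpr fun w hw => ⟨hsI, hx' w hw⟩, rfl⟩
    · rintro ⟨s, hs, rfl⟩
      exact mem_iInter₂.mpr fun w hw => (mem_iInter₂.mp hs w hw).2
  rw [hkey]
  exact ((ordConnected_biInter hEord).isPreconnected).image ψ hψc.continuousOn

/-- For every partial normal Helly circular-arc representation there
is a maximal clique `D` with `Reg(D) = Reg⁺(D)`; in particular `Reg(D)` is connected,
i.e. `D` has a single island. -/
theorem exists_clique_single_island {V : Type*} [Fintype V] [Nonempty V]
    (G : SimpleGraph V) (L : ℝ) (R' : PartialCARep G L)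
    (hN : R'.Normal) (hH : R'.Helly) :
    ∃ D : Set V, IsMaxClique G D ∧ R'.Reg D = R'.RegPlus D ∧ IsConnected (R'.Reg D) := by
  classical
  haveI : Fact (0 < L) := ⟨R'.hL⟩
  set S : Set (Set V) := {C | G.IsClique C ∧ C ⊆ R'.pre} with hSdef
  obtain ⟨C', hC'S, hC'max⟩ : ∃ a ∈ S, ∀ a' ∈ S, id a ≤ id a' → id a = id a' := by
    obtain ⟨a, ha, hmax⟩ := (Set.toFinite S).exists_maximalFor id S ⟨∅, by simp, empty_subset _⟩
    exact ⟨a, ha, fun a' h1 h2 => le_antisymm h2 (hmax h1 h2)⟩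
  have hC'cl : G.IsClique C' := hC'S.1
  have hC'pre : C' ⊆ R'.pre := hC'S.2
  set T : Set (Set V) := {C | G.IsClique C ∧ C' ⊆ C} with hTdef
  obtain ⟨D, hDT, hDmax⟩ : ∃ a ∈ T, ∀ a' ∈ T, id a ≤ id a' → id a = id a' := by
    obtain ⟨a, ha, hmax⟩ := (Set.toFinite T).exists_maximalFor id T ⟨C', hC'cl, subset_rfl⟩
    exact ⟨a, ha, fun a' h1 h2 => le_antisymm h2 (hmax h1 h2)⟩
  have hDmc : IsMaxClique G D :=
    ⟨hDT.1, fun E hE hDE => hDmax E ⟨hE, hDT.2.trans hDE⟩ hDE⟩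
  have hpreD : R'.pre ∩ D = C' :=
    (hC'max (R'.pre ∩ D) ⟨hDT.1.subset inter_subset_right, inter_subset_left⟩
      (subset_inter hC'pre hDT.2)).symm
  have hRP : R'.RegPlus D = ⋂ v ∈ C', R'.arc v := by
    ext x
    simp only [PartialCARep.RegPlus, PartialCARep.PreArcs, mem_sInter, mem_setOf_eq,
      mem_iInter]
    constructor
    · intro hx v hv
      exact hx (R'.arc v) ⟨v, by rw [hpreD]; exact hv, rfl⟩
    · rintro hx A ⟨v, hv, rfl⟩
      rw [hpreD] at hv
      exact hx v hv
  have hdisj : ∀ x ∈ R'.RegPlus D, x ∉ R'.RegMinus D := by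
    intro x hx hxm
    obtain ⟨A, ⟨hA1, hA2⟩, hxA⟩ := hxm
    obtain ⟨u, hu, rfl⟩ := hA1
    have huD : u ∉ D := fun h => hA2 ⟨u, ⟨hu, h⟩, rfl⟩
    have huC' : u ∉ C' := fun h => huD (hDT.2 h)
    have hadj : ∀ w ∈ C', G.Adj u w := by
      intro w hw
      have hneq : u ≠ w := fun h => huC' (h ▸ hw)
      have hnon : (R'.arc u ∩ R'.arc w).Nonempty :=
        ⟨x, hxA, by rw [hRP] at hx; exact mem_iInter₂.mp hx w hw⟩
      exact (R'.inter_iff u hu w (hC'pre hw) hneq).mp hnon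
    have heq : C' = insert u C' :=
      hC'max (insert u C')
        ⟨hC'cl.insert (fun w hw _ => hadj w hw), insert_subset_iff.mpr ⟨hu, hC'pre⟩⟩
        (subset_insert u C')
    exact huC' (by rw [heq]; exact mem_insert u C')
  have hReg : R'.Reg D = R'.RegPlus D := by
    ext x
    exact ⟨fun h => h.1, fun h => ⟨h, hdisj x h⟩⟩
  refine ⟨D, hDmc, hReg, ?_⟩
  rw [hReg]
  rcases C'.eq_empty_or_nonempty with hCe | ⟨v0, hv0⟩
  · have hRPu : R'.RegPlus D = univ := by
      rw [hRP, hCe]; simp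
    rw [hRPu]
    have hsurj : Function.Surjective ((↑) : ℝ → AddCircle L) :=
      QuotientAddGroup.mk'_surjective (AddSubgroup.zmultiples L)
    have hpcu : IsPreconnected (univ : Set (AddCircle L)) := by
      have him := (isPreconnected_univ (α := ℝ)).image ((↑) : ℝ → AddCircle L)
        (AddCircle.continuous_mk' L).continuousOn
      rwa [Set.image_univ, hsurj.range_eq] at him
    exact ⟨⟨(0 : AddCircle L), mem_univ _⟩, hpcu⟩
  · rw [hRP]
    have hne : (⋂ v ∈ C', R'.arc v).Nonempty := by
      refine hH C' hC'pre ⟨v0, hv0⟩ ?_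
      intro u hu v hv
      rcases eq_or_ne u v with rfl | hneq
      · refine ⟨R'.tail u + ((0 : ℝ) : AddCircle L), ?_, ?_⟩ <;>
          exact ⟨0, le_rfl, R'.len_nonneg u (hC'pre hu), rfl⟩
      · exact (R'.inter_iff u (hC'pre hu) v (hC'pre hv) hneq).mpr (hC'cl hu hv hneq)
    exact ⟨hne, key_preconnected R' hN C' hC'pre v0 hv0⟩
end
end

section
/- Let G be a graph that is not complete, and let R be a proper Helly circular-arc representation of G containing two arcs in non-normal position. Then the graph obtained from G by deleting all universal vertices is the disjoint union of two nonempty cliques. -/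
open Set

noncomputable section

namespace PHCAAux

lemma arc_eq_image (L : ℝ) (t : AddCircle L) (l : ℝ) :
    Arc L t l = (fun s : ℝ => t + (s : AddCircle L)) '' Set.Icc 0 l := by
  ext x
  simp only [Arc, Set.mem_setOf_eq, Set.mem_image, Set.mem_Icc]
  constructor
  · rintro ⟨s, h1, h2, rfl⟩; exact ⟨s, ⟨h1, h2⟩, rfl⟩
  · rintro ⟨s, ⟨h1, h2⟩, rfl⟩; exact ⟨s, h1, h2, rfl⟩

lemma arc_preconnected (L : ℝ) (t : AddCircle L) (l : ℝ) :
    IsPreconnected (Arc L t l) := by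
  rw [arc_eq_image]
  apply IsPreconnected.image isPreconnected_Icc
  apply Continuous.continuousOn
  exact continuous_const.add (AddCircle.continuous_mk' L)

lemma circPos_nonneg (L : ℝ) (hL : 0 < L) (p x : AddCircle L) : 0 ≤ circPos L hL p x := by
  haveI : Fact (0 < L) := ⟨hL⟩
  have h := ((AddCircle.equivIco L 0) (x - p)).2.1
  simpa [circPos] using h

lemma circPos_lt (L : ℝ) (hL : 0 < L) (p x : AddCircle L) : circPos L hL p x < L := by
  haveI : Fact (0 < L) := ⟨hL⟩
  have h := ((AddCircle.equivIco L 0) (x - p)).2.2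
  simpa [circPos] using h

lemma coe_circPos (L : ℝ) (hL : 0 < L) (p x : AddCircle L) :
    p + ((circPos L hL p x : ℝ) : AddCircle L) = x := by
  haveI : Fact (0 < L) := ⟨hL⟩
  have h : (((AddCircle.equivIco L 0) (x - p) : ℝ) : AddCircle L) = x - p :=
    (AddCircle.equivIco L 0).symm_apply_apply (x - p)
  show p + (((AddCircle.equivIco L 0) (x - p) : ℝ) : AddCircle L) = x
  rw [h]
  abel

lemma circPos_add_self (L : ℝ) (hL : 0 < L) (p : AddCircle L) {r : ℝ}
    (hr0 : 0 ≤ r) (hrL : r < L) : circPos L hL p (p + (r : AddCircle L)) = r := by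
  haveI : Fact (0 < L) := ⟨hL⟩
  set b := circPos L hL p (p + (r : AddCircle L)) with hb
  have hb0 : 0 ≤ b := circPos_nonneg L hL p _
  have hbL : b < L := circPos_lt L hL p _
  have hpb := coe_circPos L hL p (p + (r : AddCircle L))
  rw [← hb] at hpb
  have h2 : ((b : ℝ) : AddCircle L) = ((r : ℝ) : AddCircle L) := add_left_cancel hpb
  have hmb : b ∈ Set.Ico (0:ℝ) (0 + L) := ⟨hb0, by linarith⟩
  have hmr : r ∈ Set.Ico (0:ℝ) (0 + L) := ⟨hr0, by linarith⟩
  exact (AddCircle.coe_eq_coe_iff_of_mem_Ico hmb hmr).mp h2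

lemma circPos_self (L : ℝ) (hL : 0 < L) (p : AddCircle L) : circPos L hL p p = 0 := by
  have h := circPos_add_self L hL p (le_refl (0:ℝ)) hL
  simpa using h

lemma mem_arc_iff (L : ℝ) (hL : 0 < L) (p t x : AddCircle L) {l : ℝ} (hl0 : 0 ≤ l) (hlL : l < L) :
    x ∈ Arc L t l ↔
      (circPos L hL p t ≤ circPos L hL p x ∧ circPos L hL p x ≤ circPos L hL p t + l) ∨
      (circPos L hL p x < circPos L hL p t ∧ circPos L hL p x + L ≤ circPos L hL p t + l) := by
  set a := circPos L hL p t with ha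
  set b := circPos L hL p x with hb
  have ha0 : 0 ≤ a := circPos_nonneg L hL p t
  have haL : a < L := circPos_lt L hL p t
  have hb0 : 0 ≤ b := circPos_nonneg L hL p x
  have hbL : b < L := circPos_lt L hL p x
  have hpa : p + ((a : ℝ) : AddCircle L) = t := coe_circPos L hL p t
  have hpb : p + ((b : ℝ) : AddCircle L) = x := coe_circPos L hL p x
  have key : ∀ s : ℝ, t + ((s : ℝ) : AddCircle L) = p + ((a + s : ℝ) : AddCircle L) := by
    intro s
    rw [AddCircle.coe_add, ← add_assoc, hpa]
  constructor
  · rintro ⟨s, hs0, hsl, hx⟩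
    rw [key s] at hx
    have hz : ((b - (a + s) : ℝ) : AddCircle L) = 0 := by
      have h2 : ((b : ℝ) : AddCircle L) = ((a + s : ℝ) : AddCircle L) :=
        add_left_cancel (hpb.trans hx)
      rw [AddCircle.coe_sub, h2, sub_self]
    obtain ⟨n, hn⟩ := (AddCircle.coe_eq_zero_iff L).mp hz
    have hnL : (n : ℝ) * L = b - (a + s) := by rwa [zsmul_eq_mul] at hn
    have hn0 : n = 0 ∨ n = -1 := by
      have hlt : (n : ℝ) < 1 := by nlinarith
      have hgt : (-2 : ℝ) < n := by nlinarith
      have h1 : n < 1 := by exact_mod_cast hlt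
      have h2 : -2 < n := by exact_mod_cast hgt
      omega
    rcases hn0 with rfl | rfl
    · left
      push_cast at hnL
      constructor <;> linarith
    · right
      push_cast at hnL
      constructor <;> linarith
  · rintro (⟨h1, h2⟩ | ⟨h1, h2⟩)
    · refine ⟨b - a, by linarith, by linarith, ?_⟩
      rw [key (b - a), show a + (b - a) = b from by ring]
      exact hpb.symm
    · refine ⟨b + L - a, by linarith, by linarith, ?_⟩
      rw [key (b + L - a), show a + (b + L - a) = b + L from by ring, AddCircle.coe_add,
        (AddCircle.coe_period (p := L)), add_zero]
      exact hpb.symm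

end PHCAAux

/-- If `G` is not complete and has a proper Helly circular-arc
representation containing two arcs in non-normal position, then deleting all universal
vertices from `G` leaves a disjoint union of two nonempty cliques. -/
theorem phca_nonNormal_two_cliques {V : Type*} [Fintype V] (G : SimpleGraph V)
    (hnc : ∃ u v : V, u ≠ v ∧ ¬ G.Adj u v)
    (L : ℝ) (R : CARep G L) (hP : R.Proper) (hH : R.Helly)
    (u v : V) (huv : u ≠ v) (hnn : NonNormalPos (R.arc u) (R.arc v)) :
    ∃ A B : Set V, A.Nonempty ∧ B.Nonempty ∧ Disjoint A B ∧
      A ∪ B = {w : V | ¬ IsUniversalVertex G w} ∧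
      G.IsClique A ∧ G.IsClique B ∧
      ∀ a ∈ A, ∀ b ∈ B, ¬ G.Adj a b := by
    classical
  obtain ⟨hI, hNC⟩ := hnn
  have hL0 : (0:ℝ) < L := R.hL
  set βf := circPos L R.hL (R.tail u) with hβf
  have hβ0 : ∀ x, 0 ≤ βf x := by
    rw [hβf]; exact fun x => PHCAAux.circPos_nonneg L R.hL _ x
  have hβL : ∀ x, βf x < L := by
    rw [hβf]; exact fun x => PHCAAux.circPos_lt L R.hL _ x
  have hβadd : ∀ r : ℝ, 0 ≤ r → r < L → βf (R.tail u + (r : AddCircle L)) = r := by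
    rw [hβf]; exact fun r h1 h2 => PHCAAux.circPos_add_self L R.hL (R.tail u) h1 h2
  have hβp : βf (R.tail u) = 0 := by
    rw [hβf]; exact PHCAAux.circPos_self L R.hL _
  have harc : ∀ (w : V) (x : AddCircle L), x ∈ R.arc w ↔
      ((βf (R.tail w) ≤ βf x ∧ βf x ≤ βf (R.tail w) + R.len w) ∨
       (βf x < βf (R.tail w) ∧ βf x + L ≤ βf (R.tail w) + R.len w)) := by
    rw [hβf]
    exact fun w x =>
      PHCAAux.mem_arc_iff L R.hL (R.tail u) (R.tail w) x (R.len_nonneg w) (R.len_lt w)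
  have memu : ∀ x, x ∈ R.arc u ↔ βf x ≤ R.len u := by
    intro x
    rw [harc u x, hβp]
    constructor
    · rintro (⟨_, h⟩ | ⟨h, _⟩)
      · linarith
      · linarith [hβ0 x]
    · intro h
      exact Or.inl ⟨hβ0 x, by linarith⟩
  set c := βf (R.tail v) with hc
  have hc0 : 0 ≤ c := by rw [hc]; exact hβ0 _
  have hcL : c < L := by rw [hc]; exact hβL _
  have memv : ∀ x, x ∈ R.arc v ↔
      ((c ≤ βf x ∧ βf x ≤ c + R.len v) ∨ (βf x < c ∧ βf x + L ≤ c + R.len v)) := by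
    rw [hc]; exact fun x => harc v x
  have hlv0 : 0 ≤ R.len v := R.len_nonneg v
  have hlvL : R.len v < L := R.len_lt v
  have hlu0 : 0 ≤ R.len u := R.len_nonneg u
  have hluL : R.len u < L := R.len_lt u
  -- the representation must wrap: `L ≤ c + len v`
  have hwrap : L ≤ c + R.len v := by
    by_contra hw
    push_neg at hw
    have memv2 : ∀ x, x ∈ R.arc v ↔ (c ≤ βf x ∧ βf x ≤ c + R.len v) := by
      intro x
      rw [memv x]
      constructor
      · rintro (h | ⟨_, h2⟩)
        · exact h
        · constructor <;> linarith [hβ0 x]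
      · exact Or.inl
    by_cases hclu : c ≤ R.len u
    · apply hNC
      have hm1 : min (R.len u - c) (R.len v) ≤ R.len u - c := min_le_left _ _
      have hm2 : min (R.len u - c) (R.len v) ≤ R.len v := min_le_right _ _
      have hm0 : 0 ≤ min (R.len u - c) (R.len v) := le_min (by linarith) hlv0
      have heq : R.arc u ∩ R.arc v = Arc L (R.tail v) (min (R.len u - c) (R.len v)) := by
        ext x
        rw [Set.mem_inter_iff, memu x, memv2 x,
          PHCAAux.mem_arc_iff L R.hL (R.tail u) (R.tail v) x hm0 (by linarith), ← hβf, ← hc]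
        constructor
        · rintro ⟨h1, h2, h3⟩
          left
          refine ⟨h2, ?_⟩
          have h4 := le_min (show βf x - c ≤ R.len u - c by linarith)
            (show βf x - c ≤ R.len v by linarith)
          linarith
        · rintro (⟨h1, h2⟩ | ⟨h1, h2⟩)
          · exact ⟨by linarith, h1, by linarith⟩
          · exfalso; linarith [hβ0 x]
      rw [heq]
      exact PHCAAux.arc_preconnected L _ _
    · push_neg at hclu
      obtain ⟨x, hxu, hxv⟩ := hI
      rw [memu x] at hxu
      rw [memv2 x] at hxv
      linarith [hxv.1, hxv.2]
  set y := c + R.len v - L with hy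
  have hy0 : 0 ≤ y := by rw [hy]; linarith
  have hyc : y < c := by rw [hy]; linarith
  have hyL : y < L := by linarith
  have memv' : ∀ x, x ∈ R.arc v ↔ (c ≤ βf x ∨ βf x ≤ y) := by
    intro x
    rw [memv x]
    constructor
    · rintro (⟨h, _⟩ | ⟨_, h⟩)
      · exact Or.inl h
      · exact Or.inr (by linarith)
    · rintro (h | h)
      · exact Or.inl ⟨h, by linarith [hβL x]⟩
      · exact Or.inr ⟨by linarith, by linarith⟩
  have hylu : y < R.len u := by
    by_contra hyl
    push_neg at hyl
    apply hNC
    have heq : R.arc u ∩ R.arc v = Arc L (R.tail u) (R.len u) := by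
      ext x
      constructor
      · exact fun h => h.1
      · intro h
        have hx : βf x ≤ R.len u := (memu x).mp h
        exact ⟨h, (memv' x).mpr (Or.inr (by linarith))⟩
    rw [heq]
    exact PHCAAux.arc_preconnected L _ _
  have hclu : c ≤ R.len u := by
    by_contra hcl
    push_neg at hcl
    apply hNC
    have hmem : ∀ x, x ∈ Arc L (R.tail u) y ↔ βf x ≤ y := by
      intro x
      rw [PHCAAux.mem_arc_iff L R.hL (R.tail u) (R.tail u) x hy0 hyL, ← hβf, hβp]
      constructor
      · rintro (⟨_, h⟩ | ⟨h, _⟩)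
        · linarith
        · linarith [hβ0 x]
      · intro h
        exact Or.inl ⟨hβ0 x, by linarith⟩
    have heq : R.arc u ∩ R.arc v = Arc L (R.tail u) y := by
      ext x
      rw [Set.mem_inter_iff, memu x, memv' x, hmem x]
      constructor
      · rintro ⟨h1, (h2 | h2)⟩
        · linarith
        · exact h2
      · intro h
        exact ⟨by linarith, Or.inr h⟩
    rw [heq]
    exact PHCAAux.arc_preconnected L _ _
  -- the two "private regions" X and Y, with witnessing points
  have hβc : βf (R.tail u + ((c : ℝ) : AddCircle L)) = c := hβadd c hc0 hcL
  have hpt1X : (R.tail u + ((c : ℝ) : AddCircle L)) ∈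
      {x : AddCircle L | c ≤ βf x ∧ βf x ≤ R.len u} := ⟨hβc.ge, hβc.le.trans hclu⟩
  have hpt0Y : R.tail u ∈ {x : AddCircle L | βf x ≤ y} := by
    show βf (R.tail u) ≤ y
    rw [hβp]; exact hy0
  have hXu : {x : AddCircle L | c ≤ βf x ∧ βf x ≤ R.len u} ⊆ R.arc u :=
    fun x hx => (memu x).mpr hx.2
  have hXv : {x : AddCircle L | c ≤ βf x ∧ βf x ≤ R.len u} ⊆ R.arc v :=
    fun x hx => (memv' x).mpr (Or.inl hx.1)
  have hYu : {x : AddCircle L | βf x ≤ y} ⊆ R.arc u :=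
    fun x hx => (memu x).mpr (le_trans (show βf x ≤ y from hx) (le_of_lt hylu))
  have hYv : {x : AddCircle L | βf x ≤ y} ⊆ R.arc v :=
    fun x hx => (memv' x).mpr (Or.inr hx)
  -- Claim 1: every arc contains X or contains Y
  have claim1 : ∀ w : V, ({x : AddCircle L | c ≤ βf x ∧ βf x ≤ R.len u} ⊆ R.arc w) ∨
      ({x : AddCircle L | βf x ≤ y} ⊆ R.arc w) := by
    intro w
    by_contra hcon
    push_neg at hcon
    obtain ⟨h1, h2⟩ := hcon
    rw [Set.not_subset] at h1 h2
    obtain ⟨x0, hx0X, hx0w⟩ := h1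
    obtain ⟨y0, hy0Y, hy0w⟩ := h2
    obtain ⟨hx0c, hx0lu⟩ := hx0X
    have hy0y : βf y0 ≤ y := hy0Y
    by_cases hG2 : ∃ g, g ∈ R.arc w ∧ R.len u < βf g
    · by_cases hG1 : ∃ g, g ∈ R.arc w ∧ y < βf g ∧ βf g < c
      · obtain ⟨g2, hg2w, hg2⟩ := hG2
        obtain ⟨g1, hg1w, hg1a, hg1b⟩ := hG1
        rw [harc w g2] at hg2w
        rw [harc w g1] at hg1w
        rw [harc w x0] at hx0w
        rw [harc w y0] at hy0w
        have hb2L := hβL g2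
        have h0y0 := hβ0 y0
        rcases hg1w with ⟨hA, hB⟩ | ⟨hA, hB⟩
        · rcases hg2w with ⟨hC, hD⟩ | ⟨hC, hD⟩
          · exact hx0w (Or.inl ⟨by linarith, by linarith⟩)
          · exact hy0w (Or.inr ⟨by linarith, by linarith⟩)
        · exact hy0w (Or.inr ⟨by linarith, by linarith⟩)
      · push_neg at hG1
        have hsub : R.arc w ⊆ R.arc v := by
          intro x hx
          apply (memv' x).mpr
          by_contra hc2
          push_neg at hc2
          exact absurd (hG1 x hx hc2.2) (by push_neg; exact hc2.1)
        exact hP w v ((Set.ssubset_iff_of_subset hsub).mpr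
          ⟨x0, (memv' x0).mpr (Or.inl hx0c), hx0w⟩)
    · push_neg at hG2
      have hsub : R.arc w ⊆ R.arc u := fun x hx => (memu x).mpr (hG2 x hx)
      exact hP w u ((Set.ssubset_iff_of_subset hsub).mpr
        ⟨x0, (memu x0).mpr hx0lu, hx0w⟩)
  -- Claim 2: an arc containing both X and Y belongs to a universal vertex
  have claim2 : ∀ w : V, ({x : AddCircle L | c ≤ βf x ∧ βf x ≤ R.len u} ⊆ R.arc w) →
      ({x : AddCircle L | βf x ≤ y} ⊆ R.arc w) → IsUniversalVertex G w := by
    intro w hXw hYw w' hne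
    rcases claim1 w' with h | h
    · exact (R.inter_iff w w' (Ne.symm hne)).mp ⟨_, hXw hpt1X, h hpt1X⟩
    · exact (R.inter_iff w w' (Ne.symm hne)).mp ⟨_, hYw hpt0Y, h hpt0Y⟩
  have hdis : ∀ w w' : V, w ≠ w' → ¬G.Adj w w' → ∀ x, x ∈ R.arc w → x ∉ R.arc w' := by
    intro w w' hne hna x hx hx'
    exact hna ((R.inter_iff w w' hne).mp ⟨x, hx, hx'⟩)
  have hmissY : ∀ a : V, ({x : AddCircle L | c ≤ βf x ∧ βf x ≤ R.len u} ⊆ R.arc a) →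
      ¬IsUniversalVertex G a → ∀ x, βf x ≤ y → x ∉ R.arc a := by
    intro a hXa hnu x hxY hxa
    simp only [IsUniversalVertex] at hnu
    push_neg at hnu
    obtain ⟨d, hd, hnd⟩ := hnu
    rcases claim1 d with hXd | hYd
    · exact hdis a d (Ne.symm hd) hnd _ (hXa hpt1X) (hXd hpt1X)
    · exact hdis a d (Ne.symm hd) hnd x hxa (hYd hxY)
  have hmissX : ∀ b : V, ({x : AddCircle L | βf x ≤ y} ⊆ R.arc b) →
      ¬IsUniversalVertex G b → ∀ x, c ≤ βf x → βf x ≤ R.len u → x ∉ R.arc b := by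
    intro b hYb hnu x hx1 hx2 hxb
    simp only [IsUniversalVertex] at hnu
    push_neg at hnu
    obtain ⟨d, hd, hnd⟩ := hnu
    rcases claim1 d with hXd | hYd
    · exact hdis b d (Ne.symm hd) hnd x hxb (hXd ⟨hx1, hx2⟩)
    · exact hdis b d (Ne.symm hd) hnd _ (hYb hpt0Y) (hYd hpt0Y)
  -- nonemptiness witnesses from the non-adjacent pair
  obtain ⟨u₀, v₀, hne0, hna0⟩ := hnc
  have hnu0 : ¬IsUniversalVertex G u₀ := fun h => hna0 (h v₀ (Ne.symm hne0))
  have hnv0 : ¬IsUniversalVertex G v₀ := fun h => hna0 ((h u₀ hne0).symm)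
  have hAB : (∃ w : V, ({x : AddCircle L | c ≤ βf x ∧ βf x ≤ R.len u} ⊆ R.arc w) ∧
        ¬IsUniversalVertex G w) ∧
      (∃ w : V, ({x : AddCircle L | βf x ≤ y} ⊆ R.arc w) ∧ ¬IsUniversalVertex G w) := by
    rcases claim1 u₀ with h0 | h0 <;> rcases claim1 v₀ with h1 | h1
    · exact absurd ((R.inter_iff u₀ v₀ hne0).mp ⟨_, h0 hpt1X, h1 hpt1X⟩) hna0
    · exact ⟨⟨u₀, h0, hnu0⟩, ⟨v₀, h1, hnv0⟩⟩
    · exact ⟨⟨v₀, h1, hnv0⟩, ⟨u₀, h0, hnu0⟩⟩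
    · exact absurd ((R.inter_iff u₀ v₀ hne0).mp ⟨_, h0 hpt0Y, h1 hpt0Y⟩) hna0
  refine ⟨{w : V | ({x : AddCircle L | c ≤ βf x ∧ βf x ≤ R.len u} ⊆ R.arc w) ∧
        ¬IsUniversalVertex G w},
      {w : V | ({x : AddCircle L | βf x ≤ y} ⊆ R.arc w) ∧ ¬IsUniversalVertex G w},
      hAB.1, hAB.2, ?_, ?_, ?_, ?_, ?_⟩
  · rw [Set.disjoint_left]
    rintro w ⟨hXw, hnuw⟩ ⟨hYw, _⟩
    exact hnuw (claim2 w hXw hYw)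
  · ext w
    simp only [Set.mem_union, Set.mem_setOf_eq]
    constructor
    · rintro (⟨_, h⟩ | ⟨_, h⟩) <;> exact h
    · intro h
      rcases claim1 w with h' | h'
      · exact Or.inl ⟨h', h⟩
      · exact Or.inr ⟨h', h⟩
  · intro a ha a' ha' hne
    exact (R.inter_iff a a' hne).mp ⟨_, ha.1 hpt1X, ha'.1 hpt1X⟩
  · intro b hb b' hb' hne
    exact (R.inter_iff b b' hne).mp ⟨_, hb.1 hpt0Y, hb'.1 hpt0Y⟩
  · intro a ha b hb hadj
    obtain ⟨haX, hanu⟩ := ha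
    obtain ⟨hbY, hbnu⟩ := hb
    have hab : (R.arc a ∩ R.arc b).Nonempty := (R.inter_iff a b hadj.ne).mpr hadj
    have hba : (R.arc b ∩ R.arc a).Nonempty := by
      obtain ⟨z, h1, h2⟩ := hab; exact ⟨z, h2, h1⟩
    have sX : ∀ {w w' : V}, ({x : AddCircle L | c ≤ βf x ∧ βf x ≤ R.len u} ⊆ R.arc w) →
        ({x : AddCircle L | c ≤ βf x ∧ βf x ≤ R.len u} ⊆ R.arc w') →
        (R.arc w ∩ R.arc w').Nonempty := fun h h' => ⟨_, h hpt1X, h' hpt1X⟩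
    have sY : ∀ {w w' : V}, ({x : AddCircle L | βf x ≤ y} ⊆ R.arc w) →
        ({x : AddCircle L | βf x ≤ y} ⊆ R.arc w') →
        (R.arc w ∩ R.arc w').Nonempty := fun h h' => ⟨_, h hpt0Y, h' hpt0Y⟩
    have hpair : ∀ x ∈ ({u, v, a, b} : Set V), ∀ x' ∈ ({u, v, a, b} : Set V),
        (R.arc x ∩ R.arc x').Nonempty := by
      intro x hx x' hx'
      simp only [Set.mem_insert_iff, Set.mem_singleton_iff] at hx hx'
      rcases hx with rfl | rfl | rfl | rfl <;> rcases hx' with rfl | rfl | rfl | rfl <;>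
        first
          | exact hab
          | exact hba
          | exact sX (by first | exact hXu | exact hXv | exact haX)
              (by first | exact hXu | exact hXv | exact haX)
          | exact sY (by first | exact hYu | exact hYv | exact hbY)
              (by first | exact hYu | exact hYv | exact hbY)
    obtain ⟨z, hz⟩ := hH {u, v, a, b} ⟨u, by simp⟩ hpair
    simp only [Set.mem_iInter] at hz
    have hzu := hz u (by simp)
    have hzv := hz v (by simp)
    have hza := hz a (by simp)
    have hzb := hz b (by simp)
    rcases (memv' z).mp hzv with h2 | h2
    · exact hmissX b hbY hbnu z h2 ((memu z).mp hzu) hzb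
    · exact hmissY a haX hanu z h2 hza
end
end

section
/- Let n ≥ 1 and t ≥ 8 be integers and let s_1, …, s_{3n} be positive integers with t/4 < s_i < t/2 for all i and s_1 + ⋯ + s_{3n} = nt. Let G be the disjoint union of the paths P_{2s_1}, …, P_{2s_{3n}} together with n isolated vertices v_0, …, v_{n−1}. On a circle of circumference n(t+2), let x_0, …, x_{n(t+2)−1} be equally spaced points (consecutive points at distance 1) in clockwise order, and let R' be the partial representation that assigns to each v_j the closed arc of length 1 from x_{j(t+2)} to x_{j(t+2)+1} in clockwise direction. Then R' extends to a unit circular-arc representation of G if and only if the multiset {s_1, …, s_{3n}} can be partitioned into n triples each summing to t. -/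
open Set

noncomputable section

/-- The graph of the reduction: the disjoint union of the paths `P_{2·s i}`
(for `i : Fin (3n)`) together with `n` isolated vertices. -/
def redGraph (n : ℕ) (s : Fin (3 * n) → ℕ) :
    SimpleGraph ((Σ i : Fin (3 * n), Fin (2 * s i)) ⊕ Fin n) where
  Adj x y := ∃ (i : Fin (3 * n)) (a b : Fin (2 * s i)),
    x = Sum.inl ⟨i, a⟩ ∧ y = Sum.inl ⟨i, b⟩ ∧ (a.val + 1 = b.val ∨ b.val + 1 = a.val)
  symm := by
    constructor
    rintro x y ⟨i, a, b, hx, hy, h⟩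
    exact ⟨i, b, a, hy, hx, h.symm⟩
  loopless := by
    constructor
    rintro x ⟨i, a, b, hx, hy, h⟩
    rw [hx, Sum.inl.injEq] at hy
    have hab : a = b := by
      have := congrArg (fun z : (Σ j : Fin (3 * n), Fin (2 * s j)) => z.2.val) hy
      exact Fin.ext this
    subst hab
    omega


namespace UCAAux

theorem coe_eq_coe (L u w : ℝ) : ((u : AddCircle L) = w) ↔ ∃ k : ℤ, u - w = k * L := by
  constructor
  · intro hc
    have := (QuotientAddGroup.eq (s := AddSubgroup.zmultiples L)).mp hc
    rw [AddSubgroup.mem_zmultiples_iff] at this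
    obtain ⟨k, hk⟩ := this
    exact ⟨-k, by push_cast [zsmul_eq_mul] at hk ⊢; linarith⟩
  · rintro ⟨k, hk⟩
    refine (QuotientAddGroup.eq (s := AddSubgroup.zmultiples L)).mpr ?_
    rw [AddSubgroup.mem_zmultiples_iff]
    exact ⟨-k, by push_cast [zsmul_eq_mul]; linarith⟩

theorem mem_arc (L a len : ℝ) (x : AddCircle L) :
    x ∈ Arc L (a : AddCircle L) len ↔
      ∃ r : ℝ, 0 ≤ r ∧ r ≤ len ∧ x = ((a + r : ℝ) : AddCircle L) := by
  unfold Arc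
  simp only [Set.mem_setOf_eq]
  constructor
  · rintro ⟨s, h1, h2, h3⟩; exact ⟨s, h1, h2, by rw [h3]; rfl⟩
  · rintro ⟨s, h1, h2, h3⟩; exact ⟨s, h1, h2, by rw [h3]; rfl⟩

/-- Intersection of two unit arcs whose tails are in the fundamental domain. -/
theorem unitArc_inter (L a b : ℝ) (hL : 0 < L) (ha : 0 ≤ a) (ha' : a + 1 < L)
    (hb : 0 ≤ b) (hb' : b + 1 < L) :
    (Arc L (a : AddCircle L) 1 ∩ Arc L (b : AddCircle L) 1).Nonempty ↔ |a - b| ≤ 1 := by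
  constructor
  · rintro ⟨x, hxa, hxb⟩
    rw [mem_arc] at hxa hxb
    obtain ⟨r, hr0, hr1, hxr⟩ := hxa
    obtain ⟨q, hq0, hq1, hxq⟩ := hxb
    rw [hxr] at hxq
    obtain ⟨k, hk⟩ := (coe_eq_coe L _ _).mp hxq
    have hk0 : k = 0 := by
      rcases lt_trichotomy k 0 with h | h | h
      · exfalso
        have hk1 : k ≤ -1 := by omega
        have : (k : ℝ) ≤ -1 := by exact_mod_cast hk1
        nlinarith
      · exact h
      · exfalso; have : (1 : ℝ) ≤ (k : ℝ) := by exact_mod_cast h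
        nlinarith
    rw [hk0] at hk; push_cast at hk
    rw [abs_le]; constructor <;> linarith
  · intro hab
    rcases le_total a b with h | h
    · refine ⟨(b : AddCircle L), ?_, ?_⟩
      · rw [mem_arc]; exact ⟨b - a, by linarith, by rw [abs_le] at hab; linarith, by norm_num⟩
      · rw [mem_arc]; exact ⟨0, le_refl 0, by norm_num, by norm_num⟩
    · refine ⟨(a : AddCircle L), ?_, ?_⟩
      · rw [mem_arc]; exact ⟨0, le_refl 0, by norm_num, by norm_num⟩
      · rw [mem_arc]; exact ⟨a - b, by linarith, by rw [abs_le] at hab; linarith, by norm_num⟩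

theorem sep_card_aux : ∀ (m : ℕ) (D : Finset ℝ), D.card = m →
    (∀ x ∈ D, ∀ y ∈ D, x ≠ y → 1 < |x - y|) → ∀ lo hi : ℝ, (∀ x ∈ D, lo < x ∧ x < hi) →
    D = ∅ ∨ (D.card : ℝ) < hi - lo + 1 := by
  intro m
  induction m with
  | zero => intro D hD _ _ _ _; left; exact Finset.card_eq_zero.mp hD
  | succ k ih =>
    intro D hD hsep lo hi hbd
    right
    have hne : D.Nonempty := Finset.card_pos.mp (by omega)
    set mn := D.min' hne with hmn
    have hmnD : mn ∈ D := D.min'_mem hne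
    set D' := D.erase mn with hD'
    have hcard' : D'.card = k := by rw [hD', Finset.card_erase_of_mem hmnD, hD]; omega
    have hbd' : ∀ x ∈ D', mn + 1 < x ∧ x < hi := by
      intro x hx
      have hxD : x ∈ D := Finset.mem_of_mem_erase hx
      have hxne : x ≠ mn := Finset.ne_of_mem_erase hx
      have h1 : 1 < |x - mn| := hsep x hxD mn hmnD hxne
      have h2 : mn ≤ x := D.min'_le x hxD
      constructor
      · rw [abs_of_nonneg (by linarith)] at h1; linarith
      · exact (hbd x hxD).2
    have := ih D' hcard' (fun x hx y hy => hsep x (Finset.mem_of_mem_erase hx) y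
      (Finset.mem_of_mem_erase hy)) (mn + 1) hi hbd'
    have hlomn : lo < mn := (hbd mn hmnD).1
    rcases this with h | h
    · have h0 : D'.card = 0 := by rw [h]; rfl
      have h1 : D.card = 1 := by omega
      rw [h1]
      have : mn < hi := (hbd mn hmnD).2
      push_cast; linarith
    · rw [hD, show k + 1 = D'.card + 1 by omega]
      push_cast; linarith

theorem sep_card (D : Finset ℝ) (hsep : ∀ x ∈ D, ∀ y ∈ D, x ≠ y → 1 < |x - y|)
    (lo hi : ℝ) (hbd : ∀ x ∈ D, lo < x ∧ x < hi) :
    D = ∅ ∨ (D.card : ℝ) < hi - lo + 1 :=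
  sep_card_aux D.card D rfl hsep lo hi hbd

noncomputable def pairpos (η : ℝ) (m : ℕ) : ℝ := (m / 2 : ℕ) * (1 + η) + (m % 2 : ℕ) * (1/4)

theorem pairpos_succ_sub (η : ℝ) (m : ℕ) (h0 : 0 ≤ η) (h1 : η ≤ 1/4) :
    0 ≤ pairpos η (m+1) - pairpos η m ∧ pairpos η (m+1) - pairpos η m ≤ 1 := by
  unfold pairpos
  rcases Nat.even_or_odd m with ⟨j, hj⟩ | ⟨j, hj⟩
  · subst hj
    have e1 : (j + j) / 2 = j := by omega
    have e2 : (j + j + 1) / 2 = j := by omega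
    have e3 : (j + j) % 2 = 0 := by omega
    have e4 : (j + j + 1) % 2 = 1 := by omega
    rw [e1, e2, e3, e4]; push_cast; constructor <;> linarith
  · subst hj
    have e1 : (2*j + 1) / 2 = j := by omega
    have e2 : (2*j + 1 + 1) / 2 = j + 1 := by omega
    have e3 : (2*j+1) % 2 = 1 := by omega
    have e4 : (2*j + 1 + 1) % 2 = 0 := by omega
    rw [e1, e2, e3, e4]; push_cast; constructor <;> linarith

theorem pairpos_two_step (η : ℝ) (m : ℕ) : pairpos η (m+2) = pairpos η m + (1 + η) := by
  unfold pairpos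
  have e1 : (m + 2) / 2 = m / 2 + 1 := by omega
  have e2 : (m + 2) % 2 = m % 2 := by omega
  rw [e1, e2]; push_cast; ring

theorem pairpos_mono (η : ℝ) (h0 : 0 ≤ η) (h1 : η ≤ 1/4) : Monotone (pairpos η) := by
  apply monotone_nat_of_le_succ
  intro m
  have := pairpos_succ_sub η m h0 h1
  linarith [this.1]

theorem pairpos_sep (η : ℝ) (h0 : 0 < η) (h1 : η ≤ 1/4) (m m' : ℕ) (h : m + 2 ≤ m') :
    pairpos η m + 1 < pairpos η m' := by
  have := pairpos_mono η (le_of_lt h0) h1 h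
  rw [pairpos_two_step] at this
  linarith

theorem pairpos_adj (η : ℝ) (h0 : 0 ≤ η) (h1 : η ≤ 1/4) (m : ℕ) :
    |pairpos η (m+1) - pairpos η m| ≤ 1 := by
  have := pairpos_succ_sub η m h0 h1
  rw [abs_of_nonneg this.1]; exact this.2

theorem pairpos_zero (η : ℝ) : pairpos η 0 = 0 := by unfold pairpos; norm_num

theorem pairpos_span (η : ℝ) (s : ℕ) (hs : 1 ≤ s) :
    pairpos η (2*s - 1) = (s - 1 : ℝ)*(1+η) + 1/4 := by
  unfold pairpos
  have e1 : (2*s - 1) / 2 = s - 1 := by omega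
  have e2 : (2*s - 1) % 2 = 1 := by omega
  rw [e1, e2, Nat.cast_sub hs]
  push_cast; ring

theorem card_evens (m : ℕ) :
    (Finset.univ.filter (fun a : Fin (2*m) => a.val % 2 = 0)).card = m := by
  have h : (Finset.univ.filter (fun a : Fin (2*m) => a.val % 2 = 0)).card
      = (Finset.univ : Finset (Fin m)).card := by
    refine Finset.card_bij' (fun (a : Fin (2*m)) ha => (⟨a.val / 2, by
        have := a.isLt; omega⟩ : Fin m))
      (fun (b : Fin m) hb => (⟨2 * b.val, by have := b.isLt; omega⟩ : Fin (2*m)))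
      (fun a ha => Finset.mem_univ _) (fun b hb => by
        simp only [Finset.mem_filter]
        exact ⟨Finset.mem_univ _, by omega⟩) ?_ ?_
    · intro a ha
      simp only [Finset.mem_filter] at ha
      apply Fin.ext; simp only; omega
    · intro b hb; apply Fin.ext; simp only; omega
  simpa using h

theorem circPos_spec (L : ℝ) (hL : 0 < L) (x : AddCircle L) :
    0 ≤ circPos L hL 0 x ∧ circPos L hL 0 x < L ∧
      ((circPos L hL 0 x : ℝ) : AddCircle L) = x := by
  haveI : Fact (0 < L) := ⟨hL⟩
  unfold circPos
  have h2 := (AddCircle.equivIco L 0 (x - 0)).2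
  rw [Set.mem_Ico] at h2
  refine ⟨h2.1, by linarith [h2.2], ?_⟩
  have h1 := (AddCircle.equivIco L 0).symm_apply_apply (x - 0)
  have h3 : ((AddCircle.equivIco L 0).symm (AddCircle.equivIco L 0 (x - 0)) : AddCircle L)
      = ((AddCircle.equivIco L 0 (x-0) : ℝ) : AddCircle L) := rfl
  rw [h1] at h3
  rw [← h3, sub_zero]

end UCAAux

set_option maxHeartbeats 1600000 in
/-- Correctness of the reduction from 3-Partition: with
`t/4 < s_i < t/2` and `∑ s_i = n·t`, the partial representation placing the `n`
isolated vertices as unit arcs `[x_{j(t+2)}, x_{j(t+2)+1}]` on the circle of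
circumference `n(t+2)` extends to a unit circular-arc representation of the graph
iff the `s_i` can be partitioned into `n` triples, each summing to `t`. -/
theorem uca_reduction_correct (n t : ℕ) (hn : 1 ≤ n) (ht : 8 ≤ t)
    (s : Fin (3 * n) → ℕ)
    (hs : ∀ i, t < 4 * s i ∧ 2 * s i < t)
    (hsum : ∑ i, s i = n * t)
    (R' : PartialCARep (redGraph n s) ((n * (t + 2) : ℕ) : ℝ))
    (hpre : R'.pre = Set.range Sum.inr)
    (htails : ∀ j : Fin n,
      R'.tail (Sum.inr j) = ((((j : ℕ) * (t + 2) : ℕ) : ℝ) : AddCircle ((n * (t + 2) : ℕ) : ℝ)))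
    (hlens : ∀ j : Fin n, R'.len (Sum.inr j) = 1) :
    (∃ R : CARep (redGraph n s) ((n * (t + 2) : ℕ) : ℝ), R.Extends R' ∧ R.IsUnit) ↔
    ∃ f : Fin (3 * n) → Fin n, ∀ j : Fin n,
      (Finset.univ.filter (fun i => f i = j)).card = 3 ∧
      ∑ i ∈ Finset.univ.filter (fun i => f i = j), s i = t := by
  classical
  have h3n : ∀ i : Fin (3*n), 3 ≤ s i := fun i => by
    have h1 := (hs i).1; have h2 := (hs i).2; omega
  have hzero : ∀ i : Fin (3*n), 0 < 2 * s i := fun i => by have := h3n i; omega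
  revert hpre htails hlens
  revert R'
  set L : ℝ := ((n * (t + 2) : ℕ) : ℝ) with hLdef
  intro R' hpre htails hlens
  have hL : 0 < L := by
    have h : 0 < n * (t+2) := by positivity
    rw [hLdef]; exact_mod_cast h
  have hLc : L = (n : ℝ) * ((t : ℝ) + 2) := by rw [hLdef]; push_cast; ring
  have ht8 : (8:ℝ) ≤ (t:ℝ) := by exact_mod_cast ht
  have hn1 : (1:ℝ) ≤ (n:ℝ) := by exact_mod_cast hn
  set c : ℕ → ℝ := fun j => (j : ℝ) * ((t:ℝ) + 2) with hcdef
  have hcoef : ∀ j : Fin n, R'.tail (Sum.inr j) = ((c j.val : ℝ) : AddCircle L) := by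
    intro j
    have he : (((j:ℕ) * (t + 2) : ℕ) : ℝ) = c j.val := by simp only [hcdef]; push_cast; ring
    rw [htails j, he]
  have hc0 : ∀ j : ℕ, 0 ≤ c j := fun j => by
    simp only [hcdef]; positivity
  have hcL : ∀ j : ℕ, j < n → c j + 1 < L := by
    intro j hj
    have h1 : ((j:ℕ) : ℝ) + 1 ≤ (n:ℝ) := by exact_mod_cast hj
    simp only [hcdef]; rw [hLc]; nlinarith
  constructor
  · rintro ⟨R, hext, hunit⟩
    set ρ : ((Σ i : Fin (3*n), Fin (2 * s i)) ⊕ Fin n) → ℝ :=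
      fun v => circPos L hL 0 (R.tail v) with hρdef
    have hρ : ∀ v, 0 ≤ ρ v ∧ ρ v < L ∧ ((ρ v : ℝ) : AddCircle L) = R.tail v :=
      fun v => UCAAux.circPos_spec L hL (R.tail v)
    have hρ0 : ∀ p : (Σ i : Fin (3*n), Fin (2 * s i)), 0 ≤ ρ (Sum.inl p) :=
      fun p => (hρ (Sum.inl p)).1
    have harc : ∀ v, Arc L (R.tail v) (R.len v) = Arc L ((ρ v : ℝ) : AddCircle L) 1 := by
      intro v; rw [hunit v, (hρ v).2.2]
    have harcp : ∀ j : Fin n, Arc L (R.tail (Sum.inr j)) (R.len (Sum.inr j))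
        = Arc L ((c j.val : ℝ) : AddCircle L) 1 := by
      intro j
      have h1 : R.arc (Sum.inr j) = R'.arc (Sum.inr j) := hext _ (by rw [hpre]; exact ⟨j, rfl⟩)
      have h2 : R'.arc (Sum.inr j) = Arc L ((c j.val : ℝ) : AddCircle L) 1 := by
        unfold PartialCARep.arc
        rw [hcoef j, hlens j]
      exact h1.trans h2
    have hnadj : ∀ (p : Σ i : Fin (3*n), Fin (2*s i)) (j : Fin n),
        ¬ (redGraph n s).Adj (Sum.inl p) (Sum.inr j) := by
      rintro p j ⟨i, a, b, h1, h2, h3⟩; cases h2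
    have hdisj : ∀ (p : Σ i : Fin (3*n), Fin (2*s i)) (j : Fin n),
        ¬ (Arc L ((ρ (Sum.inl p) : ℝ) : AddCircle L) 1
            ∩ Arc L ((c j.val : ℝ) : AddCircle L) 1).Nonempty := by
      intro p j hne
      have h := R.inter_iff (Sum.inl p) (Sum.inr j) (by simp)
      rw [harc (Sum.inl p), harcp j] at h
      exact hnadj p j (h.mp hne)
    have hwrap : ∀ p : (Σ i : Fin (3*n), Fin (2 * s i)), ρ (Sum.inl p) + 1 < L := by
      intro p
      by_contra hcon
      push_neg at hcon
      have hj0 : (0:ℕ) < n := hn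
      apply hdisj p ⟨0, hj0⟩
      refine ⟨((0:ℝ) : AddCircle L), ?_, ?_⟩
      · rw [UCAAux.mem_arc]
        refine ⟨L - ρ (Sum.inl p), by linarith [(hρ (Sum.inl p)).2.1], by linarith, ?_⟩
        rw [UCAAux.coe_eq_coe]
        exact ⟨-1, by push_cast; ring⟩
      · have hc0v : c ((⟨0, hj0⟩ : Fin n) : ℕ) = 0 := by simp [hcdef]
        rw [hc0v, UCAAux.mem_arc]
        exact ⟨0, le_refl 0, by norm_num, by norm_num⟩
    have hsep_cj : ∀ (p : Σ i : Fin (3*n), Fin (2*s i)) (j : Fin n),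
        1 < |ρ (Sum.inl p) - c j.val| := by
      intro p j
      by_contra hcon
      push_neg at hcon
      exact hdisj p j ((UCAAux.unitArc_inter L _ _ hL (hρ0 p) (hwrap p) (hc0 j.val)
        (hcL j.val j.isLt)).mpr hcon)
    have hgap : ∀ p : (Σ i : Fin (3*n), Fin (2*s i)), ∃ j : ℕ, j < n ∧
        c j + 1 < ρ (Sum.inl p) ∧ ρ (Sum.inl p) + 1 < c (j+1) := by
      intro p
      set x := ρ (Sum.inl p) with hx
      have hx0 : 0 ≤ x := hρ0 p
      have hxL : x + 1 < L := hwrap p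
      have ht2 : (0:ℝ) < (t:ℝ) + 2 := by linarith
      set j : ℕ := ⌊x / ((t:ℝ)+2)⌋₊ with hjdef
      have hjle : (j : ℝ) * ((t:ℝ)+2) ≤ x := by
        have h := Nat.floor_le (show (0:ℝ) ≤ x / ((t:ℝ)+2) by positivity)
        rw [← hjdef] at h
        calc (j:ℝ) * ((t:ℝ)+2) ≤ (x / ((t:ℝ)+2)) * ((t:ℝ)+2) := by nlinarith
        _ = x := by field_simp
      have hjlt : x < ((j:ℝ)+1) * ((t:ℝ)+2) := by
        have h := Nat.lt_floor_add_one (x / ((t:ℝ)+2))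
        rw [← hjdef] at h
        calc x = (x / ((t:ℝ)+2)) * ((t:ℝ)+2) := by field_simp
        _ < ((j:ℝ)+1) * ((t:ℝ)+2) := by nlinarith
      have hjn : j < n := by
        by_contra hcon
        push_neg at hcon
        have h1 : (n:ℝ) ≤ (j:ℝ) := by exact_mod_cast hcon
        rw [hLc] at hxL
        nlinarith
      refine ⟨j, hjn, ?_, ?_⟩
      · have h := hsep_cj p ⟨j, hjn⟩
        simp only [hcdef] at h ⊢
        rw [abs_of_nonneg (by linarith)] at h
        linarith
      · rcases Nat.lt_or_ge (j+1) n with hlt | hge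
        · have h := hsep_cj p ⟨j+1, hlt⟩
          simp only [hcdef] at h ⊢
          push_cast at h ⊢
          rw [abs_of_nonpos (by nlinarith)] at h
          linarith
        · have hjn' : (j:ℝ) + 1 = (n:ℝ) := by exact_mod_cast (by omega : j + 1 = n)
          simp only [hcdef]; push_cast
          rw [hLc] at hxL
          nlinarith
    choose g hgn hg1 hg2 using hgap
    have hgap_mono : ∀ p q, g p < g q → 1 < ρ (Sum.inl q) - ρ (Sum.inl p) := by
      intro p q h
      have h1 : ((g p : ℝ) + 1) ≤ (g q : ℝ) := by exact_mod_cast h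
      have a1 := hg1 p; have a2 := hg2 p; have b1 := hg1 q; have b2 := hg2 q
      simp only [hcdef] at a1 a2 b1 b2
      push_cast at a1 a2 b1 b2
      nlinarith
    have hadj_same : ∀ p q, (redGraph n s).Adj (Sum.inl p) (Sum.inl q) → g p = g q := by
      intro p q hadj
      have hne : (Sum.inl p : (Σ i : Fin (3*n), Fin (2*s i)) ⊕ Fin n) ≠ Sum.inl q := hadj.ne
      have h := R.inter_iff _ _ hne
      rw [harc (Sum.inl p), harc (Sum.inl q)] at h
      have hdist : |ρ (Sum.inl p) - ρ (Sum.inl q)| ≤ 1 :=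
        (UCAAux.unitArc_inter L _ _ hL (hρ0 p) (hwrap p) (hρ0 q) (hwrap q)).mp (h.mpr hadj)
      by_contra hne2
      rw [abs_le] at hdist
      rcases Nat.lt_or_ge (g p) (g q) with hlt | hge
      · have := hgap_mono p q hlt; linarith
      · have hlt : g q < g p := by omega
        have := hgap_mono q p hlt; linarith
    have hpath : ∀ (i : Fin (3*n)) (a : Fin (2 * s i)), g ⟨i, a⟩ = g ⟨i, ⟨0, hzero i⟩⟩ := by
      intro i a
      suffices h : ∀ k (hk : k < 2 * s i), g ⟨i, ⟨k, hk⟩⟩ = g ⟨i, ⟨0, hzero i⟩⟩ by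
        have := h a.val a.isLt
        simpa using this
      intro k
      induction k with
      | zero => intro hk; rfl
      | succ m ihm =>
        intro hk
        have hm : m < 2 * s i := by omega
        have hadj : (redGraph n s).Adj (Sum.inl ⟨i, ⟨m+1, hk⟩⟩) (Sum.inl ⟨i, ⟨m, hm⟩⟩) :=
          ⟨i, ⟨m+1, hk⟩, ⟨m, hm⟩, rfl, rfl, Or.inr rfl⟩
        rw [hadj_same _ _ hadj]
        exact ihm hm
    set f : Fin (3*n) → Fin n := fun i => ⟨g ⟨i, ⟨0, hzero i⟩⟩, hgn _⟩ with hfdef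
    have hgf : ∀ p : (Σ i : Fin (3*n), Fin (2 * s i)), g p = (f p.1).val := by
      intro p
      have := hpath p.1 p.2
      simp only [hfdef]
      exact this
    have hsum_le : ∀ j : Fin n, ∑ i ∈ Finset.univ.filter (fun i => f i = j), s i ≤ t := by
      intro j
      set Ej : Finset (Σ i : Fin (3*n), Fin (2 * s i)) :=
        (Finset.univ.filter (fun i => f i = j)).sigma
          (fun i => Finset.univ.filter (fun a : Fin (2 * s i) => a.val % 2 = 0)) with hEj
      have hEcard : Ej.card = ∑ i ∈ Finset.univ.filter (fun i => f i = j), s i := by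
        rw [hEj, Finset.card_sigma]
        exact Finset.sum_congr rfl (fun i _ => UCAAux.card_evens (s i))
      have hmem : ∀ p ∈ Ej, f p.1 = j ∧ p.2.val % 2 = 0 := by
        intro p hp
        rw [hEj, Finset.mem_sigma] at hp
        obtain ⟨h1, h2⟩ := hp
        rw [Finset.mem_filter] at h1 h2
        exact ⟨h1.2, h2.2⟩
      have hsep : ∀ p ∈ Ej, ∀ q ∈ Ej, p ≠ q → 1 < |ρ (Sum.inl p) - ρ (Sum.inl q)| := by
        intro p hp q hq hne
        have hnadj2 : ¬ (redGraph n s).Adj (Sum.inl p) (Sum.inl q) := by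
          rintro ⟨i, a, b, h1, h2, h3⟩
          rw [Sum.inl.injEq] at h1 h2
          have hp2 := (hmem p hp).2
          have hq2 := (hmem q hq).2
          rw [h1] at hp2
          rw [h2] at hq2
          simp only at hp2 hq2
          omega
        have hne' : (Sum.inl p : (Σ i : Fin (3*n), Fin (2*s i)) ⊕ Fin n) ≠ Sum.inl q := by
          simpa using hne
        have h := R.inter_iff _ _ hne'
        rw [harc (Sum.inl p), harc (Sum.inl q)] at h
        by_contra hcon
        push_neg at hcon
        exact hnadj2 (h.mp ((UCAAux.unitArc_inter L _ _ hL (hρ0 p) (hwrap p) (hρ0 q)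
          (hwrap q)).mpr hcon))
      set Dj := Ej.image (fun p => ρ (Sum.inl p)) with hDj
      have hinj : Set.InjOn (fun p => ρ (Sum.inl p)) Ej := by
        intro p hp q hq heq
        by_contra hne
        have h := hsep p hp q hq hne
        have heq' : ρ (Sum.inl p) = ρ (Sum.inl q) := heq
        rw [heq', sub_self, abs_zero] at h
        linarith
      have hDcard : Dj.card = Ej.card := Finset.card_image_of_injOn hinj
      have hDsep : ∀ x ∈ Dj, ∀ y ∈ Dj, x ≠ y → 1 < |x - y| := by
        intro x hx y hy hxy
        obtain ⟨p, hp, rfl⟩ := Finset.mem_image.mp hx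
        obtain ⟨q, hq, rfl⟩ := Finset.mem_image.mp hy
        exact hsep p hp q hq (fun h => hxy (by rw [h]))
      have hDbd : ∀ x ∈ Dj, c j.val + 1 < x ∧ x < c j.val + ((t:ℝ) + 1) := by
        intro x hx
        obtain ⟨p, hp, rfl⟩ := Finset.mem_image.mp hx
        have hfp : f p.1 = j := (hmem p hp).1
        have hgp : g p = j.val := by rw [hgf p, hfp]
        constructor
        · have h := hg1 p; rw [hgp] at h; exact h
        · have h := hg2 p; rw [hgp] at h
          simp only [hcdef] at h ⊢
          push_cast at h
          linarith
      rcases UCAAux.sep_card Dj hDsep _ _ hDbd with hem | hlt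
      · rw [hem] at hDcard
        simp only [Finset.card_empty] at hDcard
        omega
      · rw [hDcard, hEcard] at hlt
        have h2 : ((∑ i ∈ Finset.univ.filter (fun i => f i = j), s i : ℕ) : ℝ) < (t:ℝ) + 1 := by
          linarith
        have h3 : (∑ i ∈ Finset.univ.filter (fun i => f i = j), s i) < t + 1 := by
          exact_mod_cast h2
        omega
    have hsum_fib : ∑ j : Fin n, (∑ i ∈ Finset.univ.filter (fun i => f i = j), s i) = n * t := by
      rw [Finset.sum_fiberwise]
      exact hsum
    have hsum_eq : ∀ j, ∑ i ∈ Finset.univ.filter (fun i => f i = j), s i = t := by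
      by_contra hcon
      push_neg at hcon
      obtain ⟨j0, hj0⟩ := hcon
      have hlt : ∑ i ∈ Finset.univ.filter (fun i => f i = j0), s i < t :=
        lt_of_le_of_ne (hsum_le j0) hj0
      have h := Finset.sum_lt_sum (f := fun j => ∑ i ∈ Finset.univ.filter (fun i => f i = j), s i)
        (g := fun _ => t) (fun j _ => hsum_le j) ⟨j0, Finset.mem_univ _, hlt⟩
      rw [hsum_fib] at h
      simp only [Finset.sum_const, Finset.card_univ, Fintype.card_fin, smul_eq_mul] at h
      omega
    have hcard3 : ∀ j, (Finset.univ.filter (fun i => f i = j)).card = 3 := by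
      intro j
      set F := Finset.univ.filter (fun i => f i = j) with hF
      have h1 : F.card * (t+1) ≤ 4 * t := by
        calc F.card * (t+1) = ∑ _i ∈ F, (t+1) := by rw [Finset.sum_const, smul_eq_mul]
        _ ≤ ∑ i ∈ F, 4 * s i := Finset.sum_le_sum (fun i _ => by have := (hs i).1; omega)
        _ = 4 * ∑ i ∈ F, s i := by rw [Finset.mul_sum]
        _ = 4 * t := by rw [hsum_eq j]
      have h2 : 2 * t ≤ F.card * (t-1) := by
        calc 2 * t = 2 * ∑ i ∈ F, s i := by rw [hsum_eq j]
        _ = ∑ i ∈ F, 2 * s i := by rw [Finset.mul_sum]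
        _ ≤ ∑ _i ∈ F, (t-1) := Finset.sum_le_sum (fun i _ => by have := (hs i).2; omega)
        _ = F.card * (t-1) := by rw [Finset.sum_const, smul_eq_mul]
      by_contra hne
      rcases Nat.lt_or_ge F.card 3 with hlt | hge
      · have h3 : F.card * (t-1) ≤ 2 * (t-1) := Nat.mul_le_mul_right _ (by omega)
        omega
      · have h4 : 4 ≤ F.card := by omega
        have h5 : 4 * (t+1) ≤ F.card * (t+1) := Nat.mul_le_mul_right _ h4
        omega
    exact ⟨f, fun j => ⟨hcard3 j, hsum_eq j⟩⟩
  · rintro ⟨f, hf⟩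
    have hfcard : ∀ j, (Finset.univ.filter (fun i => f i = j)).card = 3 := fun j => (hf j).1
    have hfsum : ∀ j, ∑ i ∈ Finset.univ.filter (fun i => f i = j), s i = t := fun j => (hf j).2
    set η : ℝ := 1/(100*(t:ℝ)) with hηdef
    clear_value η
    have ht0 : (0:ℝ) < (t:ℝ) := by linarith
    have hη0 : 0 < η := by rw [hηdef]; positivity
    have hη4 : η ≤ 1/4 := by
      rw [hηdef]
      rw [div_le_iff₀ (by positivity)]
      nlinarith
    set sp : Fin (3*n) → ℝ := fun i => UCAAux.pairpos η (2 * s i - 1) with hspdef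
    clear_value sp
    have hsp_val : ∀ i, sp i = ((s i : ℝ) - 1) * (1 + η) + 1/4 := by
      intro i
      simp only [hspdef]
      exact UCAAux.pairpos_span η (s i) (by have := h3n i; omega)
    have hcast3 : ∀ i, (3:ℝ) ≤ (s i : ℝ) := fun i => by exact_mod_cast h3n i
    have hcast2 : ∀ i, 2*(s i : ℝ) < (t:ℝ) := fun i => by exact_mod_cast (hs i).2
    have hsp_nonneg : ∀ i, 0 ≤ sp i := fun i => by
      rw [hsp_val i]; nlinarith [hcast3 i, hη0]
    have hsp_ub : ∀ i, sp i ≤ (s i : ℝ) - 3/4 + 1/200 := by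
      intro i
      rw [hsp_val i]
      have he : η * (100*(t:ℝ)) = 1 := by rw [hηdef]; field_simp
      have h1 : ((s i : ℝ) - 1) * η ≤ 1/200 := by
        calc ((s i : ℝ) - 1) * η ≤ ((t:ℝ)/2) * η := by
              apply mul_le_mul_of_nonneg_right _ (le_of_lt hη0)
              linarith [hcast2 i]
        _ = 1/200 * (η * (100*(t:ℝ))) := by ring
        _ = 1/200 := by rw [he]; norm_num
      nlinarith [h1, hη0]
    have hcmono : ∀ j1 j2 : ℕ, j1 ≤ j2 → c j1 ≤ c j2 := by
      intro j1 j2 h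
      have h1 : (j1:ℝ) ≤ (j2:ℝ) := by exact_mod_cast h
      simp only [hcdef]
      nlinarith
    have hcsucc : ∀ j : ℕ, c (j+1) = c j + ((t:ℝ)+2) := by
      intro j
      simp only [hcdef]
      push_cast
      ring
    set o : Fin (3*n) → ℝ := fun i => c (f i).val + 1 + 1/100 +
      ∑ i' ∈ Finset.univ.filter (fun i' => f i' = f i ∧ i' < i), (sp i' + 101/100) with hodef
    clear_value o
    have hterm_nonneg : ∀ i' : Fin (3*n), (0:ℝ) ≤ sp i' + 101/100 := fun i' => by
      linarith [hsp_nonneg i']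
    have ho_lb : ∀ i, c (f i).val + 1 + 1/100 ≤ o i := by
      intro i
      rw [hodef]
      simp only
      have h := Finset.sum_nonneg (fun i' (_ : i' ∈ Finset.univ.filter
        (fun i' => f i' = f i ∧ i' < i)) => hterm_nonneg i')
      linarith
    have ho_ub : ∀ i, o i + sp i ≤ c (f i).val + (t:ℝ) + 81/100 := by
      intro i
      have hAcast : ∑ i' ∈ Finset.univ.filter (fun i' => f i' = f i), ((s i' : ℝ))
          = (t:ℝ) := by exact_mod_cast hfsum (f i)
      have hAcard : (Finset.univ.filter (fun i' => f i' = f i)).card = 3 := hfcard (f i)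
      have hnm : i ∉ Finset.univ.filter (fun i' => f i' = f i ∧ i' < i) := by simp
      have hsubset : insert i (Finset.univ.filter (fun i' => f i' = f i ∧ i' < i))
          ⊆ Finset.univ.filter (fun i' => f i' = f i) := by
        intro x hx
        rcases Finset.mem_insert.mp hx with rfl | hx
        · simp
        · rw [Finset.mem_filter] at hx ⊢
          exact ⟨hx.1, hx.2.1⟩
      have hsum1 : (sp i + 101/100) + ∑ i' ∈ Finset.univ.filter
            (fun i' => f i' = f i ∧ i' < i), (sp i' + 101/100)
          ≤ ∑ i' ∈ Finset.univ.filter (fun i' => f i' = f i), (sp i' + 101/100) := by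
        calc (sp i + 101/100) + ∑ i' ∈ Finset.univ.filter
              (fun i' => f i' = f i ∧ i' < i), (sp i' + 101/100)
            = ∑ i' ∈ insert i (Finset.univ.filter (fun i' => f i' = f i ∧ i' < i)),
                (sp i' + 101/100) :=
              (Finset.sum_insert (f := fun i' => sp i' + 101/100) hnm).symm
        _ ≤ _ := Finset.sum_le_sum_of_subset_of_nonneg hsubset (fun x _ _ => hterm_nonneg x)
      have hsum2 : ∑ i' ∈ Finset.univ.filter (fun i' => f i' = f i), (sp i' + 101/100)
          ≤ (t:ℝ) + 159/200 := by
        have h1 : ∑ i' ∈ Finset.univ.filter (fun i' => f i' = f i), (sp i' + 101/100)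
            ≤ ∑ i' ∈ Finset.univ.filter (fun i' => f i' = f i), ((s i' : ℝ) + 53/200) :=
          Finset.sum_le_sum (fun i' _ => by linarith [hsp_ub i'])
        have h2 : ∑ i' ∈ Finset.univ.filter (fun i' => f i' = f i), ((s i' : ℝ) + 53/200)
            = (t:ℝ) + 3 * (53/200) := by
          rw [Finset.sum_add_distrib, Finset.sum_const, hAcard, hAcast]
          norm_num
        rw [h2] at h1
        linarith
      rw [hodef]
      simp only
      linarith
    have hopath : ∀ i i' : Fin (3*n), f i = f i' → i < i' → o i + sp i + 101/100 ≤ o i' := by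
      intro i i' hfe hlt
      have hnm : i ∉ Finset.univ.filter (fun i'' => f i'' = f i ∧ i'' < i) := by simp
      have hsubset : insert i (Finset.univ.filter (fun i'' => f i'' = f i ∧ i'' < i))
          ⊆ Finset.univ.filter (fun i'' => f i'' = f i' ∧ i'' < i') := by
        intro x hx
        rcases Finset.mem_insert.mp hx with rfl | hx
        · rw [Finset.mem_filter]
          exact ⟨Finset.mem_univ _, hfe, hlt⟩
        · rw [Finset.mem_filter] at hx ⊢
          exact ⟨hx.1, hx.2.1.trans hfe, hx.2.2.trans hlt⟩
      have hsum1 : (sp i + 101/100) + ∑ i'' ∈ Finset.univ.filter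
            (fun i'' => f i'' = f i ∧ i'' < i), (sp i'' + 101/100)
          ≤ ∑ i'' ∈ Finset.univ.filter (fun i'' => f i'' = f i' ∧ i'' < i'),
              (sp i'' + 101/100) := by
        calc (sp i + 101/100) + ∑ i'' ∈ Finset.univ.filter
              (fun i'' => f i'' = f i ∧ i'' < i), (sp i'' + 101/100)
            = ∑ i'' ∈ insert i (Finset.univ.filter (fun i'' => f i'' = f i ∧ i'' < i)),
                (sp i'' + 101/100) :=
              (Finset.sum_insert (f := fun i'' => sp i'' + 101/100) hnm).symm
        _ ≤ _ := Finset.sum_le_sum_of_subset_of_nonneg hsubset (fun x _ _ => hterm_nonneg x)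
      have hceq : c (f i).val = c (f i').val := by rw [hfe]
      rw [hodef]
      simp only
      linarith [hsum1, hceq]
    set τ : (Σ i : Fin (3*n), Fin (2 * s i)) → ℝ :=
      fun p => o p.1 + UCAAux.pairpos η p.2.val with hτdef
    clear_value τ
    have hpp0 : ∀ m : ℕ, 0 ≤ UCAAux.pairpos η m := by
      intro m
      have := UCAAux.pairpos_mono η (le_of_lt hη0) hη4 (Nat.zero_le m)
      rw [UCAAux.pairpos_zero] at this
      exact this
    have hpp_le_sp : ∀ (i : Fin (3*n)) (a : Fin (2 * s i)),
        UCAAux.pairpos η a.val ≤ sp i := by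
      intro i a
      rw [hspdef]
      simp only
      exact UCAAux.pairpos_mono η (le_of_lt hη0) hη4 (by have := a.isLt; omega)
    have hτ_lb : ∀ p : (Σ i : Fin (3*n), Fin (2 * s i)),
        c (f p.1).val + 1 + 1/100 ≤ τ p := by
      intro p
      rw [hτdef]
      simp only
      have := ho_lb p.1
      linarith [hpp0 p.2.val]
    have hτ_ub : ∀ p : (Σ i : Fin (3*n), Fin (2 * s i)),
        τ p ≤ c (f p.1).val + (t:ℝ) + 81/100 := by
      intro p
      rw [hτdef]
      simp only
      have h1 := ho_ub p.1
      have h2 := hpp_le_sp p.1 p.2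
      linarith
    have hτ0 : ∀ p : (Σ i : Fin (3*n), Fin (2 * s i)), 0 ≤ τ p := by
      intro p
      have := hτ_lb p
      have := hc0 (f p.1).val
      linarith
    have hτL : ∀ p : (Σ i : Fin (3*n), Fin (2 * s i)), τ p + 1 < L := by
      intro p
      have h1 := hτ_ub p
      have h2 : ((f p.1).val : ℝ) + 1 ≤ (n : ℝ) := by exact_mod_cast (f p.1).isLt
      have h3 : c (f p.1).val = ((f p.1).val : ℝ) * ((t:ℝ)+2) := by simp only [hcdef]
      rw [hLc]
      nlinarith
    have hτ_cj : ∀ (p : Σ i : Fin (3*n), Fin (2 * s i)) (j : Fin n),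
        1 < |τ p - c j.val| := by
      intro p j
      rcases le_or_gt j.val (f p.1).val with h | h
      · have h1 := hcmono _ _ h
        have h2 := hτ_lb p
        rw [abs_of_pos (by linarith)]
        linarith
      · have h1 : (f p.1).val + 1 ≤ j.val := h
        have h2 := hcmono _ _ h1
        rw [hcsucc] at h2
        have h3 := hτ_ub p
        rw [abs_sub_comm, abs_of_pos (by linarith)]
        linarith
    have hpsep : ∀ p q : (Σ i : Fin (3*n), Fin (2 * s i)), p.1 ≠ q.1 →
        1 < |τ p - τ q| := by
      have key1 : ∀ p q : (Σ i : Fin (3*n), Fin (2 * s i)), p.1 < q.1 → f p.1 = f q.1 →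
          1 < τ q - τ p := by
        intro p q hlt hfe
        have h1 := hopath p.1 q.1 hfe hlt
        have h2 : τ p ≤ o p.1 + sp p.1 := by
          rw [hτdef]; simp only; linarith [hpp_le_sp p.1 p.2]
        have h3 : o q.1 ≤ τ q := by
          rw [hτdef]; simp only; linarith [hpp0 q.2.val]
        linarith
      have key2 : ∀ p q : (Σ i : Fin (3*n), Fin (2 * s i)),
          (f p.1).val < (f q.1).val → 1 < τ q - τ p := by
        intro p q h
        have h1 : (f p.1).val + 1 ≤ (f q.1).val := h
        have h2 := hcmono _ _ h1
        rw [hcsucc] at h2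
        have h3 := hτ_ub p
        have h4 := hτ_lb q
        linarith
      intro p q hne
      by_cases hfe : f p.1 = f q.1
      · rcases lt_or_gt_of_ne hne with h | h
        · rw [abs_sub_comm, abs_of_pos (by linarith [key1 p q h hfe])]
          exact key1 p q h hfe
        · rw [abs_of_pos (by linarith [key1 q p h hfe.symm])]
          exact key1 q p h hfe.symm
      · have hvne : (f p.1).val ≠ (f q.1).val := fun h => hfe (Fin.ext h)
        rcases lt_or_gt_of_ne hvne with h | h
        · rw [abs_sub_comm, abs_of_pos (by linarith [key2 p q h])]
          exact key2 p q h
        · rw [abs_of_pos (by linarith [key2 q p h])]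
          exact key2 q p h
    have hAdjChar : ∀ (i i' : Fin (3*n)) (a : Fin (2*s i)) (b : Fin (2*s i')),
        ((redGraph n s).Adj (Sum.inl ⟨i,a⟩) (Sum.inl ⟨i',b⟩) ↔
          ∃ _h : i = i', (a.val + 1 = b.val ∨ b.val + 1 = a.val)) := by
      intro i i' a b
      constructor
      · rintro ⟨i0, a0, b0, h1, h2, h3⟩
        rw [Sum.inl.injEq] at h1 h2
        cases h1
        cases h2
        exact ⟨rfl, h3⟩
      · rintro ⟨rfl, h⟩
        exact ⟨i, a, b, rfl, rfl, h⟩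
    have hL1 : (1:ℝ) < L := by rw [hLc]; nlinarith
    refine ⟨⟨hL, (fun v => match v with
        | Sum.inl p => ((τ p : ℝ) : AddCircle L)
        | Sum.inr j => R'.tail (Sum.inr j)), fun _ => 1, fun _ => zero_le_one,
        fun _ => hL1, ?_⟩, ?_, fun v => rfl⟩
    · rintro (p | j) (q | j') huv
      · -- inl / inl
        show ((Arc L ((τ p : ℝ) : AddCircle L) 1 ∩ Arc L ((τ q : ℝ) : AddCircle L) 1).Nonempty
          ↔ (redGraph n s).Adj (Sum.inl p) (Sum.inl q))
        obtain ⟨i, a⟩ := p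
        obtain ⟨i', b⟩ := q
        rw [UCAAux.unitArc_inter L _ _ hL (hτ0 ⟨i,a⟩) (hτL ⟨i,a⟩) (hτ0 ⟨i',b⟩) (hτL ⟨i',b⟩),
          hAdjChar i i' a b]
        constructor
        · intro hd
          by_cases hi : i = i'
          · subst hi
            refine ⟨rfl, ?_⟩
            have hab : a.val ≠ b.val := by
              intro h
              exact huv (by rw [Sum.inl.injEq]; exact Sigma.ext rfl (heq_of_eq (Fin.ext h)))
            by_contra hcon
            push_neg at hcon
            have hττ : τ (⟨i, a⟩ : Σ i : Fin (3*n), Fin (2 * s i)) - τ ⟨i, b⟩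
                = UCAAux.pairpos η a.val - UCAAux.pairpos η b.val := by
              rw [hτdef]; simp only; ring
            rw [abs_le, hττ] at hd
            rcases Nat.lt_or_ge a.val b.val with h | h
            · have h2 : a.val + 2 ≤ b.val := by omega
              have := UCAAux.pairpos_sep η hη0 hη4 a.val b.val h2
              linarith
            · have h2 : b.val + 2 ≤ a.val := by omega
              have := UCAAux.pairpos_sep η hη0 hη4 b.val a.val h2
              linarith
          · exact absurd hd (not_le.mpr (hpsep ⟨i,a⟩ ⟨i',b⟩ hi))
        · rintro ⟨rfl, hcase⟩
          have hadjpp := UCAAux.pairpos_adj η (le_of_lt hη0) hη4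
          have hττ : τ (⟨i, a⟩ : Σ i : Fin (3*n), Fin (2 * s i)) - τ ⟨i, b⟩
              = UCAAux.pairpos η a.val - UCAAux.pairpos η b.val := by
            rw [hτdef]; simp only; ring
          rw [hττ]
          rcases hcase with h | h
          · rw [show UCAAux.pairpos η a.val - UCAAux.pairpos η b.val
              = -(UCAAux.pairpos η (a.val+1) - UCAAux.pairpos η a.val) by rw [h]; ring,
              abs_neg]
            exact hadjpp a.val
          · rw [show UCAAux.pairpos η a.val - UCAAux.pairpos η b.val
              = UCAAux.pairpos η (b.val+1) - UCAAux.pairpos η b.val by rw [h]]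
            exact hadjpp b.val
      · -- inl / inr
        show ((Arc L ((τ p : ℝ) : AddCircle L) 1 ∩ Arc L (R'.tail (Sum.inr j')) 1).Nonempty
          ↔ (redGraph n s).Adj (Sum.inl p) (Sum.inr j'))
        refine iff_of_false ?_ ?_
        · intro hne
          rw [hcoef j'] at hne
          have := (UCAAux.unitArc_inter L _ _ hL (hτ0 p) (hτL p) (hc0 _)
            (hcL _ j'.isLt)).mp hne
          exact absurd this (not_le.mpr (hτ_cj p j'))
        · rintro ⟨_, _, _, _, h2, _⟩
          cases h2
      · -- inr / inl
        show ((Arc L (R'.tail (Sum.inr j)) 1 ∩ Arc L ((τ q : ℝ) : AddCircle L) 1).Nonempty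
          ↔ (redGraph n s).Adj (Sum.inr j) (Sum.inl q))
        refine iff_of_false ?_ ?_
        · intro hne
          rw [hcoef j] at hne
          rw [Set.inter_comm] at hne
          have := (UCAAux.unitArc_inter L _ _ hL (hτ0 q) (hτL q) (hc0 _)
            (hcL _ j.isLt)).mp hne
          exact absurd this (not_le.mpr (hτ_cj q j))
        · rintro ⟨_, _, _, h1, _, _⟩
          cases h1
      · -- inr / inr
        show ((Arc L (R'.tail (Sum.inr j)) 1 ∩ Arc L (R'.tail (Sum.inr j')) 1).Nonempty
          ↔ (redGraph n s).Adj (Sum.inr j) (Sum.inr j'))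
        have hmem1 : (Sum.inr j : (Σ i : Fin (3*n), Fin (2 * s i)) ⊕ Fin n) ∈ R'.pre := by
          rw [hpre]; exact ⟨j, rfl⟩
        have hmem2 : (Sum.inr j' : (Σ i : Fin (3*n), Fin (2 * s i)) ⊕ Fin n) ∈ R'.pre := by
          rw [hpre]; exact ⟨j', rfl⟩
        have h := R'.inter_iff _ hmem1 _ hmem2 huv
        rw [hlens j, hlens j'] at h
        exact h
    · intro v hv
      rw [hpre] at hv
      obtain ⟨j, rfl⟩ := hv
      show Arc L (R'.tail (Sum.inr j)) 1 = R'.arc (Sum.inr j)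
      unfold PartialCARep.arc
      rw [hlens j]
end
end
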